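/- arXiv:0705.0167 — 7 statements merged into one kernel-verified Lean document; each statement's English description precedes it below -/
import Mathlib

section
/- Let A, A* be a tridiagonal pair on V, with d + 1 the number of eigenspaces of A (from condition (ii)) and δ + 1 the number of eigenspaces of A* (from condition (iii)). Then d = δ. -/
noncomputable section

open Module

/-- The `i`-th eigenspace in an ordering `θ 0, …, θ d` of the eigenvalues of `A`,
with the convention that it is `⊥` for `i > d` (so `V_{d+1} = 0`). -/
def evSp {V : Type*} [AddCommGroup V] [Module ℂ V]
    (A : Module.End ℂ V) (θ : ℕ → ℂ) (d : ℕ) (i : ℕ) : Submodule ℂ V :=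
  if i ≤ d then A.eigenspace (θ i) else ⊥

/-- A tridiagonal pair `A, A*` on `V`: both maps are diagonalizable, there are orderings
`V_0, …, V_d` (with eigenvalues `θ 0, …, θ d`) of the eigenspaces of `A` and
`V*_0, …, V*_δ` (with eigenvalues `ψ 0, …, ψ δ`) of the eigenspaces of `A*`
satisfying the tridiagonal conditions (with `V_{-1} = 0`, `V_{d+1} = 0`,
`V*_{-1} = 0`, `V*_{δ+1} = 0`), and the pair is irreducible. -/
structure TDPair (V : Type*) [AddCommGroup V] [Module ℂ V] where
  A : Module.End ℂ V
  Astar : Module.End ℂ V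
  d : ℕ
  δ : ℕ
  θ : ℕ → ℂ
  ψ : ℕ → ℂ
  θ_inj : ∀ i ≤ d, ∀ j ≤ d, θ i = θ j → i = j
  ψ_inj : ∀ i ≤ δ, ∀ j ≤ δ, ψ i = ψ j → i = j
  eigA_ne : ∀ i ≤ d, A.eigenspace (θ i) ≠ ⊥
  eigAstar_ne : ∀ i ≤ δ, Astar.eigenspace (ψ i) ≠ ⊥
  eigA_all : ∀ μ : ℂ, A.eigenspace μ ≠ ⊥ → ∃ i ≤ d, μ = θ i
  eigAstar_all : ∀ μ : ℂ, Astar.eigenspace μ ≠ ⊥ → ∃ i ≤ δ, μ = ψ i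
  diagA : ⨆ i ∈ Finset.range (d + 1), A.eigenspace (θ i) = ⊤
  diagAstar : ⨆ i ∈ Finset.range (δ + 1), Astar.eigenspace (ψ i) = ⊤
  triA : ∀ i ≤ d, Submodule.map Astar (evSp A θ d i) ≤
      evSp A θ d (i - 1) ⊔ evSp A θ d i ⊔ evSp A θ d (i + 1)
  triAstar : ∀ i ≤ δ, Submodule.map A (evSp Astar ψ δ i) ≤
      evSp Astar ψ δ (i - 1) ⊔ evSp Astar ψ δ i ⊔ evSp Astar ψ δ (i + 1)
  irred : ∀ W : Submodule ℂ V, Submodule.map A W ≤ W → Submodule.map Astar W ≤ W →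
      W = ⊥ ∨ W = ⊤

/-!
Suppose `δ < d` and let `W = ∑ᵢ (V₀ + ⋯ + Vᵢ) ∩ (V*ᵢ + ⋯ + V*_δ)`. On the `i`-th summand,
`A - θᵢ` lowers the `V`-index and, by tridiagonality of `A` on the `V*`, lowers the `V*`-index
by at most one, so it maps the summand into the `(i-1)`-st one; symmetrically `A* - ψᵢ` maps it
into the `(i+1)`-st one. Hence `W` is invariant under `A` and `A*`, and it contains `V₀` because
`V*₀ + ⋯ + V*_δ = V`. By irreducibility `W = V`, but `W ⊆ V₀ + ⋯ + V_δ`, which misses `V_d`.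
Swapping the roles of `A` and `A*` gives `δ ≤ d`.
-/

open Submodule

section Tridiagonal

variable {R M : Type*} [Semiring R] [AddCommMonoid M] [Module R M]

theorem map_iSup_le_of_tridiagonal {E : ℕ → Submodule R M} {f : M →ₗ[R] M}
    (hf : ∀ h, (E h).map f ≤ E (h - 1) ⊔ E h ⊔ E (h + 1)) {p q : ℕ → Prop}
    (hpq : ∀ h, p h → q (h - 1) ∧ q h ∧ q (h + 1)) :
    (⨆ (h) (_ : p h), E h).map f ≤ ⨆ (h) (_ : q h), E h := by
  refine map_le_iff_le_comap.mpr (iSup₂_le fun h hp => map_le_iff_le_comap.mp ?_)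
  obtain ⟨hq₁, hq₂, hq₃⟩ := hpq h hp
  exact (hf h).trans (sup_le (sup_le (le_biSup E hq₁) (le_biSup E hq₂)) (le_biSup E hq₃))

end Tridiagonal

section EigenspaceSequence

variable {V : Type*} [AddCommGroup V] [Module ℂ V] {A : Module.End ℂ V} {θ : ℕ → ℂ}
  {d : ℕ}

theorem evSp_of_le {i : ℕ} (hi : i ≤ d) : evSp A θ d i = A.eigenspace (θ i) := if_pos hi

theorem evSp_of_lt {i : ℕ} (hi : d < i) : evSp A θ d i = ⊥ := if_neg (by omega)

theorem evSp_le_eigenspace (i : ℕ) : evSp A θ d i ≤ A.eigenspace (θ i) := by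
  unfold evSp
  split_ifs
  exacts [le_rfl, bot_le]

theorem sub_smul_mem_iSup_evSp {p q : ℕ → Prop} (i : ℕ) (hpq : ∀ h, p h → h ≠ i → q h)
    {x : V} (hx : x ∈ ⨆ (h) (_ : p h), evSp A θ d h) :
    A x - θ i • x ∈ ⨆ (h) (_ : q h), evSp A θ d h := by
  suffices (⨆ (h) (_ : p h), evSp A θ d h).map (A - θ i • 1) ≤
      ⨆ (h) (_ : q h), evSp A θ d h by
    simpa using this (mem_map_of_mem hx)
  refine map_le_iff_le_comap.mpr (iSup₂_le fun h hp y hy => ?_)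
  have hAy : (A - θ i • 1) y = (θ h - θ i) • y := by
    simp [Module.End.mem_eigenspace_iff.mp (evSp_le_eigenspace h hy), sub_smul]
  rw [mem_comap, hAy]
  rcases eq_or_ne h i with rfl | hne
  · simp
  · exact smul_mem _ _ (le_biSup (fun h => evSp A θ d h) (hpq h hp hne) hy)

theorem disjoint_eigenspace_iSup_evSp (hθ : ∀ i ≤ d, ∀ j ≤ d, θ i = θ j → i = j)
    {p : ℕ → Prop} {j : ℕ} (hj : j ≤ d) (hpj : ¬ p j) :
    Disjoint (A.eigenspace (θ j)) (⨆ (h) (_ : p h), evSp A θ d h) := by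
  refine (A.eigenspaces_iSupIndep (θ j)).mono_right (iSup₂_le fun h hp => ?_)
  rcases le_or_gt h d with hh | hh
  · rw [evSp_of_le hh]
    exact le_biSup (fun μ => A.eigenspace μ) fun e => hpj (hθ h hh j hj e ▸ hp)
  · simp [evSp_of_lt hh]

end EigenspaceSequence

namespace TDPair

variable {V : Type*} [AddCommGroup V] [Module ℂ V] (P : TDPair V)

def swap : TDPair V where
  A := P.Astar
  Astar := P.A
  d := P.δ
  δ := P.d
  θ := P.ψ
  ψ := P.θ
  θ_inj := P.ψ_inj
  ψ_inj := P.θ_inj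
  eigA_ne := P.eigAstar_ne
  eigAstar_ne := P.eigA_ne
  eigA_all := P.eigAstar_all
  eigAstar_all := P.eigA_all
  diagA := P.diagAstar
  diagAstar := P.diagA
  triA := P.triAstar
  triAstar := P.triA
  irred := fun W hA hAstar => P.irred W hAstar hA

theorem map_Astar_evSp_le (h : ℕ) :
    (evSp P.A P.θ P.d h).map P.Astar ≤
      evSp P.A P.θ P.d (h - 1) ⊔ evSp P.A P.θ P.d h ⊔ evSp P.A P.θ P.d (h + 1) := by
  rcases le_or_gt h P.d with hh | hh
  · exact P.triA h hh
  · simp [evSp_of_lt hh]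

theorem map_A_evSp_le (h : ℕ) :
    (evSp P.Astar P.ψ P.δ h).map P.A ≤
      evSp P.Astar P.ψ P.δ (h - 1) ⊔ evSp P.Astar P.ψ P.δ h ⊔ evSp P.Astar P.ψ P.δ (h + 1) :=
  P.swap.map_Astar_evSp_le h

/-- `V₀ + ⋯ + V_{i-1}`. -/
def lowerSum (i : ℕ) : Submodule ℂ V := ⨆ (h) (_ : h < i), evSp P.A P.θ P.d h

/-- `V*ᵢ + ⋯ + V*_δ`. -/
def upperSum (i : ℕ) : Submodule ℂ V := ⨆ (h) (_ : i ≤ h), evSp P.Astar P.ψ P.δ h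

def crossSum : Submodule ℂ V := ⨆ i, P.lowerSum (i + 1) ⊓ P.upperSum i

theorem lowerSum_mono : Monotone P.lowerSum := fun _ _ hij =>
  biSup_mono fun _ hh => lt_of_lt_of_le hh hij

theorem upperSum_anti : Antitone P.upperSum := fun _ _ hij =>
  biSup_mono fun _ hh => le_trans hij hh

theorem lowerSum_zero : P.lowerSum 0 = ⊥ := by
  simp [lowerSum]

theorem upperSum_zero : P.upperSum 0 = ⊤ := by
  refine top_le_iff.mp (P.diagAstar ▸ iSup₂_le fun h hh => ?_)
  rw [← evSp_of_le (Nat.lt_succ_iff.mp (Finset.mem_range.mp hh))]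
  exact le_biSup (fun h => evSp P.Astar P.ψ P.δ h) (Nat.zero_le h)

theorem upperSum_eq_bot {i : ℕ} (hi : P.δ < i) : P.upperSum i = ⊥ := by
  refine eq_bot_iff.mpr (iSup₂_le fun h hh => ?_)
  rw [evSp_of_lt (lt_of_lt_of_le hi hh)]

theorem lowerSum_ne_top {i : ℕ} (hi : i ≤ P.d) : P.lowerSum i ≠ ⊤ := fun htop =>
  P.eigA_ne i hi <|
    (disjoint_eigenspace_iSup_evSp (p := (· < i)) P.θ_inj hi (lt_irrefl i)).eq_bot_of_le
      (le_top.trans_eq htop.symm)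

theorem sub_smul_mem_lowerSum {i : ℕ} {x : V} (hx : x ∈ P.lowerSum (i + 1)) :
    P.A x - P.θ i • x ∈ P.lowerSum i :=
  sub_smul_mem_iSup_evSp i (fun _ hh hne => by omega) hx

theorem sub_smul_mem_upperSum {i : ℕ} {x : V} (hx : x ∈ P.upperSum i) :
    P.Astar x - P.ψ i • x ∈ P.upperSum (i + 1) :=
  sub_smul_mem_iSup_evSp i (fun _ hh hne => by omega) hx

theorem map_A_upperSum_le (i : ℕ) : (P.upperSum i).map P.A ≤ P.upperSum (i - 1) :=
  map_iSup_le_of_tridiagonal P.map_A_evSp_le fun _ hh => by omega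

theorem map_Astar_lowerSum_le (i : ℕ) : (P.lowerSum i).map P.Astar ≤ P.lowerSum (i + 1) :=
  map_iSup_le_of_tridiagonal P.map_Astar_evSp_le fun _ hh => by omega

theorem le_crossSum (i : ℕ) : P.lowerSum (i + 1) ⊓ P.upperSum i ≤ P.crossSum :=
  le_iSup (fun i => P.lowerSum (i + 1) ⊓ P.upperSum i) i

theorem map_crossSum_le_of_sub_smul_mem {f : Module.End ℂ V} (c : ℕ → ℂ)
    (hf : ∀ i, ∀ x ∈ P.lowerSum (i + 1) ⊓ P.upperSum i, f x - c i • x ∈ P.crossSum) :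
    P.crossSum.map f ≤ P.crossSum := by
  refine map_le_iff_le_comap.mpr (iSup_le fun i x hx => ?_)
  have hcx : c i • x ∈ P.crossSum := smul_mem _ _ (P.le_crossSum i hx)
  simpa using add_mem (hf i x hx) hcx

theorem map_A_crossSum_le : P.crossSum.map P.A ≤ P.crossSum := by
  refine P.map_crossSum_le_of_sub_smul_mem P.θ fun i x ⟨hxl, hxu⟩ => ?_
  cases i with
  | zero =>
    have hzero : P.A x - P.θ 0 • x = 0 := by
      simpa [P.lowerSum_zero] using P.sub_smul_mem_lowerSum hxl
    exact hzero ▸ zero_mem _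
  | succ j =>
    refine P.le_crossSum j ⟨P.sub_smul_mem_lowerSum hxl, sub_mem ?_ ?_⟩
    · exact P.map_A_upperSum_le (j + 1) (mem_map_of_mem hxu)
    · exact smul_mem _ _ (P.upperSum_anti j.le_succ hxu)

theorem map_Astar_crossSum_le : P.crossSum.map P.Astar ≤ P.crossSum := by
  refine P.map_crossSum_le_of_sub_smul_mem P.ψ fun i x ⟨hxl, hxu⟩ => ?_
  refine P.le_crossSum (i + 1) ⟨sub_mem ?_ ?_, P.sub_smul_mem_upperSum hxu⟩
  · exact P.map_Astar_lowerSum_le (i + 1) (mem_map_of_mem hxl)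
  · exact smul_mem _ _ (P.lowerSum_mono (i + 1).le_succ hxl)

theorem crossSum_ne_bot : P.crossSum ≠ ⊥ := by
  have hle : P.A.eigenspace (P.θ 0) ≤ P.crossSum := calc
    P.A.eigenspace (P.θ 0) = evSp P.A P.θ P.d 0 := (evSp_of_le P.d.zero_le).symm
    _ ≤ P.lowerSum 1 ⊓ P.upperSum 0 := by
      rw [upperSum_zero, inf_top_eq]
      exact le_biSup (fun h => evSp P.A P.θ P.d h) Nat.one_pos
    _ ≤ P.crossSum := P.le_crossSum 0
  exact fun hbot => P.eigA_ne 0 P.d.zero_le (eq_bot_iff.mpr (hbot ▸ hle))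

theorem crossSum_le_lowerSum : P.crossSum ≤ P.lowerSum (P.δ + 1) := by
  refine iSup_le fun i => ?_
  rcases le_or_gt i P.δ with hi | hi
  · exact inf_le_left.trans (P.lowerSum_mono (by omega))
  · simp [P.upperSum_eq_bot hi]

theorem d_le_δ : P.d ≤ P.δ := by
  by_contra! hlt
  have htop : P.crossSum = ⊤ :=
    (P.irred _ P.map_A_crossSum_le P.map_Astar_crossSum_le).resolve_left P.crossSum_ne_bot
  exact P.lowerSum_ne_top hlt (top_le_iff.mp (htop ▸ P.crossSum_le_lowerSum))

end TDPair

theorem tdpair_d_eq_delta_general {V : Type*} [AddCommGroup V] [Module ℂ V]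
    (P : TDPair V) :
    P.d = P.δ :=
  le_antisymm P.d_le_δ P.swap.d_le_δ

theorem tdpair_d_eq_delta {V : Type*} [AddCommGroup V] [Module ℂ V]
    [FiniteDimensional ℂ V] (hV : 0 < Module.finrank ℂ V) (P : TDPair V) :
    P.d = P.δ :=
  tdpair_d_eq_delta_general P

end
end

section
/- Let A, A* be a tridiagonal pair on V with diameter d. Then V = U^{↓↓}_0 + U^{↓↓}_1 + ⋯ + U^{↓↓}_d is a direct sum, where U^{↓↓}_i = (V*_0 + ⋯ + V*_i) ∩ (V_0 + ⋯ + V_{d−i}) for 0 ≤ i ≤ d. -/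
/-!
Write `X r = V*_0 + ⋯ + V*_{r-1}` and `Y s = V_0 + ⋯ + V_{s-1}`, so that `U^{↓↓}_i = X (i+1) ⊓ Y (d-i+1)`.
The map `A` raises the flag `X` and, shifted by the eigenvalue `θ_{s-1}`, lowers the flag `Y`; `A*` does
the opposite. Hence for each `n` the sum `W n` of the `X r ⊓ Y s` with `r + s = n` is invariant under
`A` and `A*`, so by irreducibility it is `0` or `V`. Now `W (d+1) ≤ X d ≠ V` forces `X r ⊓ Y s = 0` for
`r + s ≤ d + 1`, which by the modular law makes the `U^{↓↓}_i` independent, while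
`W (d+2) ≥ X 1 = V*_0 ≠ 0` gives `W (d+2) = V`, and `W (d+2)` is the sum of the `U^{↓↓}_i`.
-/

noncomputable section

open Module

/-- `U^{↓↓}_i = (V*_0 + ⋯ + V*_i) ∩ (V_0 + ⋯ + V_{d-i})`. -/
def Udd {V : Type*} [AddCommGroup V] [Module ℂ V] (P : TDPair V) (i : ℕ) : Submodule ℂ V :=
  (⨆ k ∈ Finset.range (i + 1), P.Astar.eigenspace (P.ψ k)) ⊓
  (⨆ k ∈ Finset.range (P.d - i + 1), P.A.eigenspace (P.θ k))

/-- `U^{↑↓}_i = (V*_{d-i} + ⋯ + V*_d) ∩ (V_0 + ⋯ + V_{d-i})`. -/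
def Uud {V : Type*} [AddCommGroup V] [Module ℂ V] (P : TDPair V) (i : ℕ) : Submodule ℂ V :=
  (⨆ k ∈ Finset.Icc (P.d - i) P.d, P.Astar.eigenspace (P.ψ k)) ⊓
  (⨆ k ∈ Finset.range (P.d - i + 1), P.A.eigenspace (P.θ k))

/-- `U^{↓↑}_i = (V*_0 + ⋯ + V*_i) ∩ (V_i + ⋯ + V_d)`. -/
def Udu {V : Type*} [AddCommGroup V] [Module ℂ V] (P : TDPair V) (i : ℕ) : Submodule ℂ V :=
  (⨆ k ∈ Finset.range (i + 1), P.Astar.eigenspace (P.ψ k)) ⊓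
  (⨆ k ∈ Finset.Icc i P.d, P.A.eigenspace (P.θ k))

/-- `U^{↑↑}_i = (V*_{d-i} + ⋯ + V*_d) ∩ (V_i + ⋯ + V_d)`. -/
def Uuu {V : Type*} [AddCommGroup V] [Module ℂ V] (P : TDPair V) (i : ℕ) : Submodule ℂ V :=
  (⨆ k ∈ Finset.Icc (P.d - i) P.d, P.Astar.eigenspace (P.ψ k)) ⊓
  (⨆ k ∈ Finset.Icc i P.d, P.A.eigenspace (P.θ k))

open Finset

section Antidiagonal

variable {α : Type*} [CompleteLattice α]

def antidiagSup (X Y : ℕ → α) (n : ℕ) : α :=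
  ⨆ p ∈ antidiagonal n, X p.1 ⊓ Y p.2

variable {X Y : ℕ → α}

theorem inf_le_antidiagSup {n r s : ℕ} (h : r + s = n) : X r ⊓ Y s ≤ antidiagSup X Y n :=
  le_iSup₂_of_le (r, s) (HasAntidiagonal.mem_antidiagonal.2 h) le_rfl

theorem antidiagSup_comm (n : ℕ) : antidiagSup X Y n = antidiagSup Y X n := by
  apply le_antisymm <;> refine iSup₂_le fun p hp => ?_ <;> rw [inf_comm] <;>
    exact inf_le_antidiagSup (by rw [HasAntidiagonal.mem_antidiagonal] at hp; omega)

theorem antidiagSup_succ_le (hX : Monotone X) (hY0 : Y 0 = ⊥) (n : ℕ) :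
    antidiagSup X Y (n + 1) ≤ X n := by
  refine iSup₂_le fun ⟨r, s⟩ h => ?_
  rw [HasAntidiagonal.mem_antidiagonal] at h
  cases s with
  | zero => simp [hY0]
  | succ s => exact inf_le_left.trans (hX (by omega))

theorem inf_eq_bot_of_antidiagSup_eq_bot (hY : Monotone Y) {n r s : ℕ}
    (h : antidiagSup X Y n = ⊥) (hrs : r + s ≤ n) : X r ⊓ Y s = ⊥ :=
  eq_bot_iff.2 <| h ▸ (inf_le_inf_left _ (hY (show s ≤ n - r by omega))).trans
    (inf_le_antidiagSup (by omega))

theorem antidiagSup_le_iSup_fin (hX0 : X 0 = ⊥) (hY0 : Y 0 = ⊥) (d : ℕ) :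
    antidiagSup X Y (d + 2) ≤ ⨆ i : Fin (d + 1), X (i + 1) ⊓ Y (d - i + 1) := by
  refine iSup₂_le fun ⟨r, s⟩ h => ?_
  rw [HasAntidiagonal.mem_antidiagonal] at h
  match r, s, h with
  | 0, _, _ => simp [hX0]
  | _, 0, _ => simp [hY0]
  | r + 1, s + 1, h =>
    exact le_iSup_of_le (⟨r, by omega⟩ : Fin (d + 1)) (by rw [show d - r + 1 = s + 1 by omega])

theorem iSupIndep_fin_inf [IsModularLattice α] (hX : Monotone X) (hY : Monotone Y) {d : ℕ}
    (h : ∀ r s, r + s ≤ d + 1 → X r ⊓ Y s = ⊥) :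
    iSupIndep fun i : Fin (d + 1) => X (i + 1) ⊓ Y (d - i + 1) := by
  intro i
  have hi := i.isLt
  have hrest : ⨆ (j) (_ : j ≠ i), X (j + 1) ⊓ Y (d - j + 1) ≤ X i ⊔ Y (d - i) := by
    refine iSup₂_le fun j hj => ?_
    rcases lt_or_gt_of_ne hj with hji | hji
    · exact inf_le_left.trans ((hX (show (j : ℕ) + 1 ≤ i from hji)).trans le_sup_left)
    · exact inf_le_right.trans ((hY (show d - j + 1 ≤ d - i by omega)).trans le_sup_right)
  rw [disjoint_iff, ← le_bot_iff]
  calc X (i + 1) ⊓ Y (d - i + 1) ⊓ ⨆ (j) (_ : j ≠ i), X (j + 1) ⊓ Y (d - j + 1)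
      ≤ Y (d - i + 1) ⊓ ((X i ⊔ Y (d - i)) ⊓ X (i + 1)) :=
        le_inf (inf_le_left.trans inf_le_right) (le_inf (inf_le_right.trans hrest)
          (inf_le_left.trans inf_le_left))
    _ ≤ Y (d - i + 1) ⊓ X i := by
        refine inf_le_inf_left _ ((IsModularLattice.sup_inf_le_assoc_of_le _
          (hX (Nat.le_succ _))).trans ?_)
        rw [inf_comm, h _ _ (by omega), sup_bot_eq]
    _ = ⊥ := by rw [inf_comm]; exact h _ _ (by omega)

end Antidiagonal

theorem Submodule.map_antidiagSup_le {R M : Type*} [Ring R] [AddCommGroup M] [Module R M]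
    {f : Module.End R M} {X Y : ℕ → Submodule R M} (c : ℕ → R) (hX : Monotone X)
    (hY0 : Y 0 = ⊥) (hfX : ∀ r, (X r).map f ≤ X (r + 1))
    (hfY : ∀ s, ∀ y ∈ Y (s + 1), f y - c s • y ∈ Y s) (n : ℕ) :
    (antidiagSup X Y n).map f ≤ antidiagSup X Y n := by
  have mem : ∀ {r s y}, r + s = n → y ∈ X r → y ∈ Y s → y ∈ antidiagSup X Y n :=
    fun h hX hY => inf_le_antidiagSup (X := X) (Y := Y) h (mem_inf.2 ⟨hX, hY⟩)
  refine map_le_iff_le_comap.2 (iSup₂_le fun ⟨r, s⟩ hrs x hx => ?_)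
  rw [HasAntidiagonal.mem_antidiagonal] at hrs
  obtain ⟨hxX, hxY⟩ := mem_inf.1 hx
  cases s with
  | zero => simp [(mem_bot R).1 (hY0 ▸ hxY)]
  | succ s =>
    rw [mem_comap, ← sub_add_cancel (f x) (c s • x)]
    exact add_mem (mem (by omega) (sub_mem (hfX r ⟨x, hxX, rfl⟩) (smul_mem _ _ (hX r.le_succ hxX)))
      (hfY s x hxY)) (smul_mem _ _ (mem hrs hxX hxY))

section EigenFlag

variable {V : Type*} [AddCommGroup V] [Module ℂ V] (B : Module.End ℂ V) (φ : ℕ → ℂ)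

def eigenFlag (j : ℕ) : Submodule ℂ V :=
  ⨆ k ∈ range j, B.eigenspace (φ k)

theorem eigenspace_le_eigenFlag {k j : ℕ} (h : k < j) : B.eigenspace (φ k) ≤ eigenFlag B φ j :=
  le_iSup₂_of_le k (mem_range.2 h) le_rfl

theorem eigenFlag_monotone : Monotone (eigenFlag B φ) := fun _ _ h =>
  iSup₂_le fun _ hk => eigenspace_le_eigenFlag B φ ((mem_range.1 hk).trans_le h)

theorem eigenFlag_zero : eigenFlag B φ 0 = ⊥ := by simp [eigenFlag]

theorem eigenFlag_one : eigenFlag B φ 1 = B.eigenspace (φ 0) := by simp [eigenFlag]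

theorem sub_smul_mem_eigenFlag {s : ℕ} {x : V} (hx : x ∈ eigenFlag B φ (s + 1)) :
    B x - φ s • x ∈ eigenFlag B φ s := by
  suffices h : eigenFlag B φ (s + 1) ≤ (eigenFlag B φ s).comap (B - φ s • 1) from h hx
  refine iSup₂_le fun k hk y hy => ?_
  rw [Submodule.mem_comap, LinearMap.sub_apply, LinearMap.smul_apply, Module.End.one_apply,
    Module.End.mem_eigenspace_iff.1 hy, ← sub_smul]
  rcases Nat.lt_succ_iff_lt_or_eq.1 (mem_range.1 hk) with hks | rfl
  · exact Submodule.smul_mem _ _ (eigenspace_le_eigenFlag B φ hks hy)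
  · simp

theorem eigenFlag_ne_top {n : ℕ} (hφ : ∀ k < n, φ k ≠ φ n) (hn : B.eigenspace (φ n) ≠ ⊥) :
    eigenFlag B φ n ≠ ⊤ := by
  intro htop
  refine hn ((B.eigenspaces_iSupIndep (φ n)).eq_bot_of_le (le_top.trans (htop.ge.trans ?_)))
  exact iSup₂_le fun k hk => le_iSup₂_of_le (φ k) (hφ k (mem_range.1 hk)) le_rfl

theorem evSp_le_eigenspace_s1 (e i : ℕ) : evSp B φ e i ≤ B.eigenspace (φ i) := by
  unfold evSp; split_ifs <;> simp

theorem map_eigenFlag_le_of_tridiagonal {C : Module.End ℂ V} {e : ℕ}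
    (tri : ∀ i ≤ e, (evSp B φ e i).map C ≤
      evSp B φ e (i - 1) ⊔ evSp B φ e i ⊔ evSp B φ e (i + 1))
    (htop : eigenFlag B φ (e + 1) = ⊤) (r : ℕ) :
    (eigenFlag B φ r).map C ≤ eigenFlag B φ (r + 1) := by
  rcases le_or_gt r e with hr | hr
  · refine Submodule.map_le_iff_le_comap.2 (iSup₂_le fun k hk => ?_)
    have hk := mem_range.1 hk
    rw [← Submodule.map_le_iff_le_comap, show B.eigenspace (φ k) = evSp B φ e k from
      (if_pos (by omega)).symm]
    refine (tri k (by omega)).trans (sup_le (sup_le ?_ ?_) ?_) <;>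
      exact (evSp_le_eigenspace_s1 B φ e _).trans (eigenspace_le_eigenFlag B φ (by omega))
  · exact le_top.trans (htop ▸ eigenFlag_monotone B φ (by omega))

end EigenFlag

theorem TDPair.antidiagSup_eq_bot_or_top {V : Type*} [AddCommGroup V] [Module ℂ V]
    (P : TDPair V) (n : ℕ) :
    antidiagSup (eigenFlag P.Astar P.ψ) (eigenFlag P.A P.θ) n = ⊥ ∨
      antidiagSup (eigenFlag P.Astar P.ψ) (eigenFlag P.A P.θ) n = ⊤ := by
  refine P.irred _ ?_ ?_
  · exact Submodule.map_antidiagSup_le P.θ (eigenFlag_monotone _ _) (eigenFlag_zero _ _)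
      (map_eigenFlag_le_of_tridiagonal _ _ P.triAstar P.diagAstar)
      (fun _ _ => sub_smul_mem_eigenFlag _ _) n
  · rw [antidiagSup_comm]
    exact Submodule.map_antidiagSup_le P.ψ (eigenFlag_monotone _ _) (eigenFlag_zero _ _)
      (map_eigenFlag_le_of_tridiagonal _ _ P.triA P.diagA)
      (fun _ _ => sub_smul_mem_eigenFlag _ _) n

theorem tdpair_split_dd_general {V : Type*} [AddCommGroup V] [Module ℂ V]
    (P : TDPair V)
    (hdd : P.δ = P.d) :
    iSupIndep (fun i : Fin (P.d + 1) => Udd P i) ∧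
      (⨆ i : Fin (P.d + 1), Udd P i) = ⊤ := by
  have hX := eigenFlag_monotone P.Astar P.ψ
  have hXd : eigenFlag P.Astar P.ψ P.d ≠ ⊤ := by
    refine eigenFlag_ne_top _ _ (fun k hk h => ?_) (hdd ▸ P.eigAstar_ne P.δ le_rfl)
    have := P.ψ_inj k (by omega) P.d hdd.ge h
    omega
  have hlow := (P.antidiagSup_eq_bot_or_top (P.d + 1)).resolve_right fun h =>
    hXd (top_unique (h ▸ antidiagSup_succ_le hX (eigenFlag_zero _ _) P.d))
  have hhigh := (P.antidiagSup_eq_bot_or_top (P.d + 2)).resolve_left fun h => by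
    refine P.eigAstar_ne 0 (Nat.zero_le _) (eq_bot_iff.2 (h ▸ ?_))
    have htop : eigenFlag P.A P.θ (P.d + 1) = ⊤ := P.diagA
    simpa [eigenFlag_one, htop] using inf_le_antidiagSup (X := eigenFlag P.Astar P.ψ)
      (Y := eigenFlag P.A P.θ) (show 1 + (P.d + 1) = P.d + 2 by omega)
  exact ⟨iSupIndep_fin_inf hX (eigenFlag_monotone _ _)
      (fun _ _ => inf_eq_bot_of_antidiagSup_eq_bot (eigenFlag_monotone _ _) hlow),
    top_unique (hhigh ▸ antidiagSup_le_iSup_fin (eigenFlag_zero _ _) (eigenFlag_zero _ _) P.d)⟩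

/-- The `(↓,↓)/(↑,↓)/(↓,↑)/(↑,↑)`-split decomposition:
`V = U_0 + U_1 + ⋯ + U_d` is a direct sum. -/
theorem tdpair_split_dd {V : Type*} [AddCommGroup V] [Module ℂ V]
    [FiniteDimensional ℂ V] (hV : 0 < Module.finrank ℂ V) (P : TDPair V)
    (hdd : P.δ = P.d) :
    iSupIndep (fun i : Fin (P.d + 1) => Udd P i) ∧
      (⨆ i : Fin (P.d + 1), Udd P i) = ⊤ :=
  tdpair_split_dd_general P hdd

end
end

section
/- Let A, A* be a tridiagonal pair on V with diameter d. Then V = U^{↑↓}_0 + U^{↑↓}_1 + ⋯ + U^{↑↓}_d is a direct sum, where U^{↑↓}_i = (V*_{d−i} + ⋯ + V*_d) ∩ (V_0 + ⋯ + V_{d−i}) for 0 ≤ i ≤ d. -/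
noncomputable section

open Module

/-!
Put `S j = V_0 + ⋯ + V_{j-1}` (`flagA`) and `T j = V*_j + ⋯ + V*_d` (`coflagAstar`), so that
`U^{↑↓}_i = S (d-i+1) ∩ T (d-i)`. By the tridiagonal conditions, `A - θ_s` maps `S (s+1) ∩ T (t+1)`
into `S s ∩ T t` and `A* - ψ_t` maps `S s ∩ T t` into `S (s+1) ∩ T (t+1)`. Hence the diagonal sums
`∑_t S (t+c) ∩ T t` for `c = 0, 1` are invariant under `A` and `A*`, so each is `0` or `V`. For
`c = 0` the sum lies in `T 1`, which misses `V*_0`, so it is `0`: `S j ∩ T j = 0` for all `j`. For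
`c = 1` it contains `S (d+1) ∩ T d = V*_d ≠ 0`, so it is `V`; it is the sum of the `U^{↑↓}_i`, and
that sum is direct by modularity of the subspace lattice, using `S j ∩ T j = 0`.
-/

theorem iSupIndep_succ_inf_of_disjoint {α : Type*} [CompleteLattice α] [IsModularLattice α]
    {S T : ℕ → α} (hS : Monotone S) (hT : Antitone T) (hST : ∀ j, Disjoint (S j) (T j)) :
    iSupIndep fun n => S (n + 1) ⊓ T n := by
  rw [iSupIndep_def]
  intro n
  have hrest : ⨆ m, ⨆ (_ : m ≠ n), S (m + 1) ⊓ T m ≤ S n ⊔ T (n + 1) :=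
    iSup₂_le fun m hm => by
      rcases hm.lt_or_gt with h | h
      · exact le_sup_of_le_left (inf_le_left.trans (hS h))
      · exact le_sup_of_le_right (inf_le_right.trans (hT h))
  have hmod : (S n ⊔ T (n + 1)) ⊓ S (n + 1) = S n := by
    rw [sup_inf_assoc_of_le _ (hS n.le_succ), (hST (n + 1)).symm.eq_bot, sup_bot_eq]
  refine disjoint_iff_inf_le.mpr (le_trans ?_ (hST n).le_bot)
  exact le_inf (hmod ▸ le_inf (inf_le_right.trans hrest) (inf_le_left.trans inf_le_left))
    (inf_le_left.trans inf_le_right)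

section Endomorphisms

variable {R M : Type*} [CommRing R] [AddCommGroup M] [Module R M]

theorem Module.End.map_sub_smul_one_le {f : Module.End R M} {p q : Submodule R M}
    (hf : p.map f ≤ q) (hpq : p ≤ q) (a : R) : p.map (f - a • 1) ≤ q := by
  refine Submodule.map_le_iff_le_comap.mpr fun x hx => ?_
  simpa using sub_mem (hf (Submodule.mem_map_of_mem hx)) (q.smul_mem a (hpq hx))

theorem Module.End.sub_smul_one_apply_of_mem_eigenspace {f : Module.End R M} {μ : R} {x : M}
    (hx : x ∈ f.eigenspace μ) (a : R) : (f - a • 1) x = (μ - a) • x := by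
  rw [Module.End.mem_eigenspace_iff] at hx
  simp [hx, sub_smul]

theorem Module.End.map_sub_smul_one_eigenspace_le (f : Module.End R M) (μ a : R) :
    (f.eigenspace μ).map (f - a • 1) ≤ f.eigenspace μ := by
  refine Submodule.map_le_iff_le_comap.mpr fun x hx => ?_
  rw [Submodule.mem_comap, sub_smul_one_apply_of_mem_eigenspace hx]
  exact Submodule.smul_mem _ _ hx

theorem Module.End.map_sub_smul_one_eigenspace_self (f : Module.End R M) (μ : R) :
    (f.eigenspace μ).map (f - μ • 1) = ⊥ := by
  refine Submodule.eq_bot_iff _ |>.mpr ?_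
  rintro _ ⟨x, hx, rfl⟩
  rw [sub_smul_one_apply_of_mem_eigenspace hx, sub_self, zero_smul]

theorem Module.End.map_iSup_le_of_map_sub_smul_one_le {ι : Type*} (f : Module.End R M)
    {X : ι → Submodule R M} (a : ι → R) (h : ∀ i, (X i).map (f - a i • 1) ≤ ⨆ j, X j) :
    (⨆ i, X i).map f ≤ ⨆ i, X i := by
  rw [Submodule.map_iSup]
  refine iSup_le fun i => ?_
  refine Submodule.map_le_iff_le_comap.mpr fun x hx => ?_
  have hsplit : f x = (f - a i • 1) x + a i • x := by simp
  rw [Submodule.mem_comap, hsplit]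
  exact add_mem (h i (Submodule.mem_map_of_mem hx))
    (Submodule.mem_iSup_of_mem i (Submodule.smul_mem _ _ hx))

end Endomorphisms

theorem evSp_of_le_s2 {V : Type*} [AddCommGroup V] [Module ℂ V] (f : Module.End ℂ V) (μ : ℕ → ℂ)
    {n k : ℕ} (h : k ≤ n) : evSp f μ n k = f.eigenspace (μ k) :=
  if_pos h

namespace TDPair

variable {V : Type*} [AddCommGroup V] [Module ℂ V] (P : TDPair V)

def flagA (j : ℕ) : Submodule ℂ V := ⨆ k ∈ Finset.range j, P.A.eigenspace (P.θ k)

def coflagAstar (j : ℕ) : Submodule ℂ V := ⨆ k ∈ Finset.Icc j P.d, P.Astar.eigenspace (P.ψ k)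

theorem flagA_mono : Monotone P.flagA := fun _ _ h =>
  biSup_mono fun _ hk => Finset.mem_range.mpr ((Finset.mem_range.mp hk).trans_le h)

theorem coflagAstar_anti : Antitone P.coflagAstar := fun _ _ h =>
  biSup_mono fun _ hk => by
    rw [Finset.mem_Icc] at hk ⊢
    exact ⟨h.trans hk.1, hk.2⟩

theorem flagA_zero : P.flagA 0 = ⊥ := by simp [flagA]

theorem flagA_eq_top {j : ℕ} (h : P.d < j) : P.flagA j = ⊤ :=
  top_unique (P.diagA.symm.le.trans (P.flagA_mono h))

theorem coflagAstar_eq_bot {j : ℕ} (h : P.d < j) : P.coflagAstar j = ⊥ := by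
  simp [coflagAstar, Finset.Icc_eq_empty_of_lt h]

theorem coflagAstar_self : P.coflagAstar P.d = P.Astar.eigenspace (P.ψ P.d) := by
  simp [coflagAstar]

theorem eigenspace_le_flagA {k j : ℕ} (h : k < j) : P.A.eigenspace (P.θ k) ≤ P.flagA j :=
  le_biSup (fun k => P.A.eigenspace (P.θ k)) (Finset.mem_range.mpr h)

theorem eigenspace_le_coflagAstar {k j : ℕ} (h : j ≤ k) (hk : k ≤ P.d) :
    P.Astar.eigenspace (P.ψ k) ≤ P.coflagAstar j :=
  le_biSup (fun k => P.Astar.eigenspace (P.ψ k)) (Finset.mem_Icc.mpr ⟨h, hk⟩)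

theorem evSp_le_flagA {k j : ℕ} (h : k < j) : evSp P.A P.θ P.d k ≤ P.flagA j := by
  unfold evSp
  split_ifs
  exacts [P.eigenspace_le_flagA h, bot_le]

theorem evSp_le_coflagAstar {k j : ℕ} (h : j ≤ k) : evSp P.Astar P.ψ P.d k ≤ P.coflagAstar j := by
  unfold evSp
  split_ifs with hk
  exacts [P.eigenspace_le_coflagAstar h hk, bot_le]

theorem map_A_sub_flagA_succ_le (s : ℕ) :
    (P.flagA (s + 1)).map (P.A - P.θ s • 1) ≤ P.flagA s := by
  simp only [flagA, Submodule.map_iSup]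
  refine iSup₂_le fun k hk => ?_
  rcases (Nat.lt_succ_iff.mp (Finset.mem_range.mp hk)).lt_or_eq with hks | rfl
  · exact (Module.End.map_sub_smul_one_eigenspace_le _ _ _).trans (P.eigenspace_le_flagA hks)
  · exact (Module.End.map_sub_smul_one_eigenspace_self _ _).trans_le bot_le

theorem map_Astar_flagA_le (s : ℕ) : (P.flagA s).map P.Astar ≤ P.flagA (s + 1) := by
  rcases le_or_gt s P.d with hs | hs
  · rw [flagA, Submodule.map_iSup]
    refine iSup_le fun k => ?_
    rw [Submodule.map_iSup]
    refine iSup_le fun hk => ?_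
    have hk : k < s := Finset.mem_range.mp hk
    have htri := P.triA k (by omega)
    rw [evSp_of_le_s2 _ _ (by omega)] at htri
    exact htri.trans (sup_le (sup_le (P.evSp_le_flagA (by omega))
      (P.eigenspace_le_flagA (by omega))) (P.evSp_le_flagA (by omega)))
  · rw [P.flagA_eq_top (j := s + 1) (by omega)]
    exact le_top

theorem map_A_coflagAstar_succ_le (hdd : P.δ = P.d) (t : ℕ) :
    (P.coflagAstar (t + 1)).map P.A ≤ P.coflagAstar t := by
  rw [coflagAstar, Submodule.map_iSup]
  refine iSup_le fun k => ?_
  rw [Submodule.map_iSup]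
  refine iSup_le fun hk => ?_
  obtain ⟨htk, hkd⟩ := Finset.mem_Icc.mp hk
  have htri := P.triAstar k (hdd ▸ hkd)
  rw [hdd, evSp_of_le_s2 _ _ hkd] at htri
  exact htri.trans (sup_le (sup_le (P.evSp_le_coflagAstar (by omega))
    (P.eigenspace_le_coflagAstar (by omega) hkd)) (P.evSp_le_coflagAstar (by omega)))

theorem map_Astar_sub_coflagAstar_le (t : ℕ) :
    (P.coflagAstar t).map (P.Astar - P.ψ t • 1) ≤ P.coflagAstar (t + 1) := by
  simp only [coflagAstar, Submodule.map_iSup]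
  refine iSup₂_le fun k hk => ?_
  obtain ⟨htk, hkd⟩ := Finset.mem_Icc.mp hk
  rcases htk.lt_or_eq with htk | rfl
  · exact (Module.End.map_sub_smul_one_eigenspace_le _ _ _).trans
      (P.eigenspace_le_coflagAstar htk hkd)
  · exact (Module.End.map_sub_smul_one_eigenspace_self _ _).trans_le bot_le

theorem map_A_sub_flagA_inf_coflagAstar_le (hdd : P.δ = P.d) (s t : ℕ) :
    (P.flagA (s + 1) ⊓ P.coflagAstar (t + 1)).map (P.A - P.θ s • 1) ≤
      P.flagA s ⊓ P.coflagAstar t :=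
  (Submodule.map_inf_le _).trans <| inf_le_inf (P.map_A_sub_flagA_succ_le s) <|
    Module.End.map_sub_smul_one_le (P.map_A_coflagAstar_succ_le hdd t)
      (P.coflagAstar_anti t.le_succ) _

theorem map_Astar_sub_flagA_inf_coflagAstar_le (s t : ℕ) :
    (P.flagA s ⊓ P.coflagAstar t).map (P.Astar - P.ψ t • 1) ≤
      P.flagA (s + 1) ⊓ P.coflagAstar (t + 1) :=
  (Submodule.map_inf_le _).trans <| inf_le_inf
    (Module.End.map_sub_smul_one_le (P.map_Astar_flagA_le s) (P.flagA_mono s.le_succ) _)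
    (P.map_Astar_sub_coflagAstar_le t)

def flagDiag (c : ℕ) : Submodule ℂ V := ⨆ t, P.flagA (t + c) ⊓ P.coflagAstar t

theorem map_A_flagDiag_le (hdd : P.δ = P.d) {c : ℕ} (hc : c ≤ 1) :
    (P.flagDiag c).map P.A ≤ P.flagDiag c := by
  unfold flagDiag
  refine Module.End.map_iSup_le_of_map_sub_smul_one_le _ (fun t => P.θ (t + c - 1)) fun t => ?_
  cases t with
  | zero =>
    -- this is where `c ≤ 1` is needed: `S c ⊆ S 1 = V_0`
    have hS : (P.flagA c).map (P.A - P.θ (c - 1) • 1) ≤ ⊥ := by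
      interval_cases c
      · simp [P.flagA_zero]
      · simpa [P.flagA_zero] using P.map_A_sub_flagA_succ_le 0
    simp only [zero_add]
    exact ((Submodule.map_mono inf_le_left).trans hS).trans bot_le
  | succ t =>
    have h := P.map_A_sub_flagA_inf_coflagAstar_le hdd (t + c) t
    rw [show t + c + 1 = t + 1 + c by omega] at h
    simp only [show t + 1 + c - 1 = t + c by omega]
    exact h.trans (le_iSup (fun t => P.flagA (t + c) ⊓ P.coflagAstar t) t)

theorem map_Astar_flagDiag_le (c : ℕ) : (P.flagDiag c).map P.Astar ≤ P.flagDiag c := by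
  unfold flagDiag
  refine Module.End.map_iSup_le_of_map_sub_smul_one_le _ P.ψ fun t => ?_
  have h := P.map_Astar_sub_flagA_inf_coflagAstar_le (t + c) t
  rw [show t + c + 1 = t + 1 + c by omega] at h
  exact h.trans (le_iSup (fun t => P.flagA (t + c) ⊓ P.coflagAstar t) (t + 1))

theorem flagDiag_eq_bot_or_eq_top (hdd : P.δ = P.d) {c : ℕ} (hc : c ≤ 1) :
    P.flagDiag c = ⊥ ∨ P.flagDiag c = ⊤ :=
  P.irred _ (P.map_A_flagDiag_le hdd hc) (P.map_Astar_flagDiag_le c)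

theorem coflagAstar_one_ne_top (hdd : P.δ = P.d) : P.coflagAstar 1 ≠ ⊤ := by
  intro htop
  have hle : P.coflagAstar 1 ≤ ⨆ ν, ⨆ (_ : ν ≠ P.ψ 0), P.Astar.eigenspace ν :=
    iSup₂_le fun k hk => by
      obtain ⟨hk1, hkd⟩ := Finset.mem_Icc.mp hk
      have hne : P.ψ k ≠ P.ψ 0 := fun h => by
        have := P.ψ_inj k (hdd ▸ hkd) 0 (Nat.zero_le _) h
        omega
      exact le_iSup₂ (f := fun ν (_ : ν ≠ P.ψ 0) => P.Astar.eigenspace ν) _ hne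
  have hdisj := P.Astar.eigenspaces_iSupIndep (P.ψ 0)
  rw [htop, top_le_iff] at hle
  rw [hle, disjoint_top] at hdisj
  exact P.eigAstar_ne 0 (Nat.zero_le _) hdisj

theorem flagDiag_zero_le : P.flagDiag 0 ≤ P.coflagAstar 1 := by
  refine iSup_le fun t => ?_
  cases t with
  | zero => simp [P.flagA_zero]
  | succ t => exact inf_le_right.trans (P.coflagAstar_anti (Nat.succ_le_succ t.zero_le))

theorem disjoint_flagA_coflagAstar (hdd : P.δ = P.d) (j : ℕ) :
    Disjoint (P.flagA j) (P.coflagAstar j) := by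
  have hbot : P.flagDiag 0 = ⊥ := (P.flagDiag_eq_bot_or_eq_top hdd zero_le_one).resolve_right
    fun htop => P.coflagAstar_one_ne_top hdd (top_unique (htop ▸ P.flagDiag_zero_le))
  exact disjoint_iff.mpr <| le_bot_iff.mp <|
    hbot ▸ le_iSup (fun t => P.flagA (t + 0) ⊓ P.coflagAstar t) j

theorem flagDiag_one_eq_top (hdd : P.δ = P.d) : P.flagDiag 1 = ⊤ := by
  refine (P.flagDiag_eq_bot_or_eq_top hdd le_rfl).resolve_left fun hbot => ?_
  have hle := le_iSup (fun t => P.flagA (t + 1) ⊓ P.coflagAstar t) P.d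
  rw [P.flagA_eq_top (Nat.lt_succ_self _), top_inf_eq, coflagAstar_self] at hle
  exact P.eigAstar_ne P.d (hdd ▸ le_rfl) (le_bot_iff.mp (hle.trans hbot.le))

end TDPair

theorem tdpair_split_ud_general {V : Type*} [AddCommGroup V] [Module ℂ V]
    (P : TDPair V)
    (hdd : P.δ = P.d) :
    iSupIndep (fun i : Fin (P.d + 1) => Uud P i) ∧
      (⨆ i : Fin (P.d + 1), Uud P i) = ⊤ := by
  have hU (i : Fin (P.d + 1)) : Uud P i = P.flagA (P.d - i + 1) ⊓ P.coflagAstar (P.d - i) :=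
    inf_comm _ _
  constructor
  · have hindep := (iSupIndep_succ_inf_of_disjoint P.flagA_mono P.coflagAstar_anti
      (P.disjoint_flagA_coflagAstar hdd)).comp (f := fun i : Fin (P.d + 1) => P.d - i)
      fun i j h => Fin.ext (by have := i.isLt; have := j.isLt; simp only at h; omega)
    simpa only [Function.comp_def, hU] using hindep
  · refine top_unique ((P.flagDiag_one_eq_top hdd).symm.le.trans (iSup_le fun t => ?_))
    rcases le_or_gt t P.d with ht | ht
    · refine le_iSup_of_le ⟨P.d - t, by omega⟩ ?_
      rw [hU, show P.d - (P.d - t) = t by omega]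
    · simp [P.coflagAstar_eq_bot ht]

/-- The `(↓,↓)/(↑,↓)/(↓,↑)/(↑,↑)`-split decomposition:
`V = U_0 + U_1 + ⋯ + U_d` is a direct sum. -/
theorem tdpair_split_ud {V : Type*} [AddCommGroup V] [Module ℂ V]
    [FiniteDimensional ℂ V] (hV : 0 < Module.finrank ℂ V) (P : TDPair V)
    (hdd : P.δ = P.d) :
    iSupIndep (fun i : Fin (P.d + 1) => Uud P i) ∧
      (⨆ i : Fin (P.d + 1), Uud P i) = ⊤ :=
  tdpair_split_ud_general P hdd

end
end

section
/- Let A, A* be a tridiagonal pair on V with diameter d, and suppose there exists a positive definite Hermitian form (·,·) on V satisfying (Au,v) = (u,Av) and (A*u,v) = (u,A*v) for all u,v ∈ V. Then for 0 ≤ i,j ≤ d with i + j ≠ d, the subspaces U^{↓↓}_i = (V*_0 + ⋯ + V*_i) ∩ (V_0 + ⋯ + V_{d−i}) and U^{↑↑}_j = (V*_{d−j} + ⋯ + V*_d) ∩ (V_j + ⋯ + V_d) are orthogonal with respect to (·,·). -/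
/-!
The form is an inner product for which `A` and `A*` are symmetric, so eigenspaces of either map
belonging to distinct eigenvalues are orthogonal. If `i + j < d`, then `U^{↓↓}_i` and `U^{↑↑}_j`
lie in the sums `V*_0 + ⋯ + V*_i` and `V*_{d-j} + ⋯ + V*_d` over disjoint index ranges; if
`i + j > d`, they lie in `V_0 + ⋯ + V_{d-i}` and `V_j + ⋯ + V_d`, again over disjoint ranges.
-/

noncomputable section

open Module

/-- The inner product `⟪x, y⟫ = form y x`: Mathlib's inner products are conjugate-linear in the
first argument, whereas `form` is linear in its first argument. -/
abbrev innerProductCoreOfForm {V : Type*} [AddCommGroup V] [Module ℂ V] (form : V → V → ℂ)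
    (form_add : ∀ u v w : V, form (u + v) w = form u w + form v w)
    (form_smul : ∀ (a : ℂ) (u v : V), form (a • u) v = a * form u v)
    (form_conj : ∀ u v : V, form v u = starRingEnd ℂ (form u v))
    (form_pos : ∀ v : V, v ≠ 0 → 0 < (form v v).re) : InnerProductSpace.Core ℂ V where
  inner x y := form y x
  conj_inner_symm x y := (form_conj x y).symm
  re_inner_nonneg x := by
    rcases eq_or_ne x 0 with rfl | hx
    · have : form 0 0 = 0 := by simpa using form_smul 0 0 0
      simp [this]
    · exact (form_pos x hx).le
  add_left x y z := by
    change form z (x + y) = form z x + form z y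
    rw [form_conj, form_add, map_add, ← form_conj, ← form_conj]
  smul_left x y r := by
    change form y (r • x) = starRingEnd ℂ r * form y x
    rw [form_conj, form_smul, map_mul, ← form_conj]
  definite x hx := by
    change form x x = 0 at hx
    by_contra hne
    simpa [hx] using form_pos x hne

open Module.End

namespace LinearMap.IsSymmetric

variable {𝕜 E : Type*} [RCLike 𝕜] [NormedAddCommGroup E] [InnerProductSpace 𝕜 E]
  {T : E →ₗ[𝕜] E}

theorem isOrtho_biSup_eigenspaces (hT : T.IsSymmetric) {ι : Type*} (μ : ι → 𝕜)
    {s t : Finset ι} (h : ∀ i ∈ s, ∀ j ∈ t, μ i ≠ μ j) :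
    (⨆ i ∈ s, eigenspace T (μ i)) ⟂ (⨆ j ∈ t, eigenspace T (μ j)) := by
  refine Submodule.isOrtho_iSup_left.mpr fun i => Submodule.isOrtho_iSup_left.mpr fun hi => ?_
  refine Submodule.isOrtho_iSup_right.mpr fun j => Submodule.isOrtho_iSup_right.mpr fun hj => ?_
  exact hT.orthogonalFamily_eigenspaces.isOrtho (h i hi j hj)

theorem isOrtho_eigenspaces_range_Icc (hT : T.IsSymmetric) (μ : ℕ → 𝕜) {d a b : ℕ}
    (hμ : ∀ i ≤ d, ∀ j ≤ d, μ i = μ j → i = j) (hab : a < b) :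
    (⨆ k ∈ Finset.range (a + 1), eigenspace T (μ k)) ⟂
      (⨆ k ∈ Finset.Icc b d, eigenspace T (μ k)) := by
  refine hT.isOrtho_biSup_eigenspaces μ fun k hk l hl hkl => ?_
  rw [Finset.mem_range] at hk
  rw [Finset.mem_Icc] at hl
  have := hμ k (by omega) l hl.2 hkl
  omega

end LinearMap.IsSymmetric

theorem form_eq_zero_of_mem_eigenspaces_range_Icc {V : Type*} [AddCommGroup V] [Module ℂ V]
    (form : V → V → ℂ)
    (form_add : ∀ u v w : V, form (u + v) w = form u w + form v w)
    (form_smul : ∀ (a : ℂ) (u v : V), form (a • u) v = a * form u v)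
    (form_conj : ∀ u v : V, form v u = starRingEnd ℂ (form u v))
    (form_pos : ∀ v : V, v ≠ 0 → 0 < (form v v).re)
    (B : Module.End ℂ V) (hB : ∀ u v : V, form (B u) v = form u (B v))
    (μ : ℕ → ℂ) {d a b : ℕ} (hμ : ∀ i ≤ d, ∀ j ≤ d, μ i = μ j → i = j) (hab : a < b)
    {u v : V} (hu : u ∈ ⨆ k ∈ Finset.range (a + 1), B.eigenspace (μ k))
    (hv : v ∈ ⨆ k ∈ Finset.Icc b d, B.eigenspace (μ k)) : form u v = 0 := by
  let := innerProductCoreOfForm form form_add form_smul form_conj form_pos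
  let : NormedAddCommGroup V := InnerProductSpace.Core.toNormedAddCommGroup (𝕜 := ℂ)
  let : InnerProductSpace ℂ V := InnerProductSpace.ofCore _
  have hBsymm : LinearMap.IsSymmetric B := fun x y => (hB y x).symm
  exact Submodule.isOrtho_iff_inner_eq.mp
    (hBsymm.isOrtho_eigenspaces_range_Icc μ hμ hab).symm v hv u hu

theorem tdpair_orth_dd_uu_general {V : Type*} [AddCommGroup V] [Module ℂ V]
    (P : TDPair V)
    (hdd : P.δ = P.d)
    (form : V → V → ℂ)
    (form_add : ∀ u v w : V, form (u + v) w = form u w + form v w)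
    (form_smul : ∀ (a : ℂ) (u v : V), form (a • u) v = a * form u v)
    (form_conj : ∀ u v : V, form v u = starRingEnd ℂ (form u v))
    (form_pos : ∀ v : V, v ≠ 0 → 0 < (form v v).re)
    (form_A : ∀ u v : V, form (P.A u) v = form u (P.A v))
    (form_Astar : ∀ u v : V, form (P.Astar u) v = form u (P.Astar v)) :
    ∀ i ≤ P.d, ∀ j ≤ P.d, i + j ≠ P.d →
      ∀ u ∈ Udd P i, ∀ v ∈ Uuu P j, form u v = 0 := by
  intro i hi j hj hij u hu v hv
  obtain ⟨huAstar, huA⟩ := Submodule.mem_inf.mp hu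
  obtain ⟨hvAstar, hvA⟩ := Submodule.mem_inf.mp hv
  rcases Nat.lt_or_gt_of_ne hij with hlt | hgt
  · exact form_eq_zero_of_mem_eigenspaces_range_Icc form form_add form_smul form_conj form_pos
      P.Astar form_Astar P.ψ (hdd ▸ P.ψ_inj) (by omega) huAstar hvAstar
  · exact form_eq_zero_of_mem_eigenspaces_range_Icc form form_add form_smul form_conj form_pos
      P.A form_A P.θ P.θ_inj (by omega) huA hvA

theorem tdpair_orth_dd_uu {V : Type*} [AddCommGroup V] [Module ℂ V]
    [FiniteDimensional ℂ V] (hV : 0 < Module.finrank ℂ V) (P : TDPair V)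
    (hdd : P.δ = P.d)
    (form : V → V → ℂ)
    (form_add : ∀ u v w : V, form (u + v) w = form u w + form v w)
    (form_smul : ∀ (a : ℂ) (u v : V), form (a • u) v = a * form u v)
    (form_conj : ∀ u v : V, form v u = starRingEnd ℂ (form u v))
    (form_pos : ∀ v : V, v ≠ 0 → 0 < (form v v).re)
    (form_A : ∀ u v : V, form (P.A u) v = form u (P.A v))
    (form_Astar : ∀ u v : V, form (P.Astar u) v = form u (P.Astar v)) :
    ∀ i ≤ P.d, ∀ j ≤ P.d, i + j ≠ P.d →
      ∀ u ∈ Udd P i, ∀ v ∈ Uuu P j, form u v = 0 :=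
  tdpair_orth_dd_uu_general P hdd form form_add form_smul form_conj form_pos form_A form_Astar
end
end

section
/- Let A, A* be a tridiagonal pair on V with diameter d, and suppose there exists a positive definite Hermitian form (·,·) on V satisfying (Au,v) = (u,Av) and (A*u,v) = (u,A*v) for all u,v ∈ V. Then for 0 ≤ i,j ≤ d with i + j ≠ d, the subspaces U^{↓↑}_i = (V*_0 + ⋯ + V*_i) ∩ (V_i + ⋯ + V_d) and U^{↑↓}_j = (V*_{d−j} + ⋯ + V*_d) ∩ (V_0 + ⋯ + V_{d−j}) are orthogonal with respect to (·,·). -/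
noncomputable section

open Module

/-! Both `A` and `A*` are self-adjoint for a positive definite form, so their eigenvalues are
real and eigenspaces for distinct eigenvalues are orthogonal; hence so are sums of eigenspaces
over index sets with no common eigenvalue. If `i + j < d`, the `A*`-index ranges `0..i` and
`d-j..d` of `U^{↓↑}_i` and `U^{↑↓}_j` are disjoint; if `i + j > d`, the `A`-index ranges `i..d`
and `0..d-j` are. -/

section HermitianForm

variable {K V : Type*} [Field K] [StarRing K] [AddCommGroup V] [Module K V]

def sesqFormOfConjSymm (form : V → V → K)
    (form_add : ∀ u v w : V, form (u + v) w = form u w + form v w)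
    (form_smul : ∀ (a : K) (u v : V), form (a • u) v = a * form u v)
    (form_conj : ∀ u v : V, form v u = starRingEnd K (form u v)) :
    V →ₗ[K] V →ₗ⋆[K] K :=
  LinearMap.mk₂'ₛₗ (RingHom.id K) (starRingEnd K) form form_add form_smul
    (fun u v w => by simp only [form_conj _ u, form_add, map_add])
    (fun a u v => by simp only [form_conj _ u, form_smul, map_mul, smul_eq_mul])

theorem Submodule.le_orthogonalBilin_comm {R M : Type*} [CommSemiring R] [AddCommMonoid M]
    [Module R M] {I₁ I₂ : R →+* R} {B : M →ₛₗ[I₁] M →ₛₗ[I₂] R} (hB : B.IsRefl)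
    {S T : Submodule R M} : S ≤ T.orthogonalBilin B ↔ T ≤ S.orthogonalBilin B :=
  ⟨fun h _ ht _ hs => hB _ _ (h hs _ ht), fun h _ hs _ ht => hB _ _ (h ht _ hs)⟩

variable {F : V →ₗ[K] V →ₗ⋆[K] K} (hF₀ : ∀ v, F v v = 0 → v = 0)
  {B : Module.End K V} (hB : F.IsAdjointPair F B B)
include hF₀ hB

theorem starRingEnd_eq_of_mem_eigenspace {ρ : K} {w : V} (hw : w ∈ B.eigenspace ρ)
    (hw₀ : w ≠ 0) : starRingEnd K ρ = ρ := by
  have hBw := Module.End.mem_eigenspace_iff.mp hw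
  have h : starRingEnd K ρ * F w w = ρ * F w w := by
    calc starRingEnd K ρ * F w w = F w (B w) := by simp [hBw]
      _ = F (B w) w := (hB w w).symm
      _ = ρ * F w w := by simp [hBw]
  exact mul_right_cancel₀ (mt (hF₀ w) hw₀) h

theorem eigenspace_le_orthogonalBilin {μ ν : K} (hμν : μ ≠ ν) :
    B.eigenspace ν ≤ (B.eigenspace μ).orthogonalBilin F := by
  intro v hv u hu
  rcases eq_or_ne v 0 with rfl | hv₀
  · exact map_zero _
  have hν := starRingEnd_eq_of_mem_eigenspace hF₀ hB hv hv₀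
  have h : μ * F u v = ν * F u v := by
    calc μ * F u v = F (B u) v := by simp [Module.End.mem_eigenspace_iff.mp hu]
      _ = F u (B v) := hB u v
      _ = ν * F u v := by simp [Module.End.mem_eigenspace_iff.mp hv, hν]
  exact (mul_eq_mul_right_iff.mp h).resolve_left hμν

theorem iSup_eigenspace_le_orthogonalBilin (hF : F.IsRefl) {ι : Type*} (θ : ι → K)
    {S T : Finset ι} (hST : ∀ k ∈ S, ∀ l ∈ T, θ k ≠ θ l) :
    ⨆ l ∈ T, B.eigenspace (θ l) ≤ (⨆ k ∈ S, B.eigenspace (θ k)).orthogonalBilin F :=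
  iSup₂_le fun l hl => (Submodule.le_orthogonalBilin_comm hF).mp <| iSup₂_le fun k hk =>
    eigenspace_le_orthogonalBilin hF₀ hB (hST k hk l hl).symm

end HermitianForm

theorem tdpair_orth_du_ud_general {V : Type*} [AddCommGroup V] [Module ℂ V]
    (P : TDPair V)
    (hdd : P.δ = P.d)
    (form : V → V → ℂ)
    (form_add : ∀ u v w : V, form (u + v) w = form u w + form v w)
    (form_smul : ∀ (a : ℂ) (u v : V), form (a • u) v = a * form u v)
    (form_conj : ∀ u v : V, form v u = starRingEnd ℂ (form u v))
    (form_pos : ∀ v : V, v ≠ 0 → 0 < (form v v).re)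
    (form_A : ∀ u v : V, form (P.A u) v = form u (P.A v))
    (form_Astar : ∀ u v : V, form (P.Astar u) v = form u (P.Astar v)) :
    ∀ i ≤ P.d, ∀ j ≤ P.d, i + j ≠ P.d →
      ∀ u ∈ Udu P i, ∀ v ∈ Uud P j, form u v = 0 := by
  intro i hi j hj hij u hu v hv
  let F := sesqFormOfConjSymm form form_add form_smul form_conj
  have hF : F.IsRefl := fun x y h => by
    change form y x = 0
    rw [form_conj, show form x y = 0 from h, map_zero]
  have hF₀ : ∀ w, F w w = 0 → w = 0 := fun w h => by
    by_contra hw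
    exact (form_pos w hw).ne' (by rw [show form w w = 0 from h, Complex.zero_re])
  rcases hij.lt_or_gt with hlt | hgt
  · refine iSup_eigenspace_le_orthogonalBilin hF₀ form_Astar hF P.ψ ?_ hv.1 u hu.1
    intro k hk l hl hkl
    simp only [Finset.mem_range, Finset.mem_Icc] at hk hl
    have := P.ψ_inj k (by omega) l (by omega) hkl
    omega
  · refine iSup_eigenspace_le_orthogonalBilin hF₀ form_A hF P.θ ?_ hv.2 u hu.2
    intro k hk l hl hkl
    simp only [Finset.mem_range, Finset.mem_Icc] at hk hl
    have := P.θ_inj k (by omega) l (by omega) hkl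
    omega

theorem tdpair_orth_du_ud {V : Type*} [AddCommGroup V] [Module ℂ V]
    [FiniteDimensional ℂ V] (hV : 0 < Module.finrank ℂ V) (P : TDPair V)
    (hdd : P.δ = P.d)
    (form : V → V → ℂ)
    (form_add : ∀ u v w : V, form (u + v) w = form u w + form v w)
    (form_smul : ∀ (a : ℂ) (u v : V), form (a • u) v = a * form u v)
    (form_conj : ∀ u v : V, form v u = starRingEnd ℂ (form u v))
    (form_pos : ∀ v : V, v ≠ 0 → 0 < (form v v).re)
    (form_A : ∀ u v : V, form (P.A u) v = form u (P.A v))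
    (form_Astar : ∀ u v : V, form (P.Astar u) v = form u (P.Astar v)) :
    ∀ i ≤ P.d, ∀ j ≤ P.d, i + j ≠ P.d →
      ∀ u ∈ Udu P i, ∀ v ∈ Uud P j, form u v = 0 :=
  tdpair_orth_du_ud_general P hdd form form_add form_smul form_conj form_pos form_A form_Astar

end
end

section
/- With the Q-polynomial distance-regular graph setup, let W be an irreducible T-module. Then the diameter of W equals the dual diameter of W, i.e. |{i : 0 ≤ i ≤ D, E*_iW ≠ 0}| = |{i : 0 ≤ i ≤ D, E_iW ≠ 0}|. -/
/-!
On an irreducible `T`-module `W`, the adjacency matrix `A` maps `E*_i W` into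
`E*_{i-1} W + E*_i W + E*_{i+1} W` (triangle inequality), and dually `A*` maps `E_j W` into
`E_{j-1} W + E_j W + E_{j+1} W`, because `q^1_{ij} = 0` for `|i - j| > 1`. Moreover
`E_i, E*_i ∈ T` by Lagrange interpolation, the dual eigenvalues `θ*_i` being distinct by
`Q`-polynomiality. Irreducibility then makes both supports `{i : E*_i W ≠ 0}` and
`{j : E_j W ≠ 0}` intervals. If `ρ`, `τ` are their lower ends, the spaces
`W ∩ (E*_0 V + ⋯ + E*_{ρ+h} V) ∩ (E_{τ+h} V + ⋯ + E_D V)` sum to a nonzero `T`-submodule,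
hence to `W`, and they vanish once `τ + h` passes the top of the `E`-support: so the first
interval is at most as long as the second, and by symmetry they have the same length.
-/

noncomputable section

open Matrix Finset
open scoped ComplexInnerProductSpace

/-- A `Q`-polynomial distance-regular graph setup: a finite connected simple graph `G` on `X`
with diameter `D ≥ 3`, intersection numbers `p h i j`, primitive idempotents
`E 0, …, E D` of the Bose–Mesner algebra with (distinct, real) eigenvalues `θ 0, …, θ D`,
and Krein parameters `q h i j` satisfying the `Q`-polynomial condition with respect to the
ordering `E 0, …, E D`. -/
structure QPolyDRG (X : Type*) [Fintype X] [DecidableEq X] where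
  G : SimpleGraph X
  conn : G.Connected
  D : ℕ
  hD3 : 3 ≤ D
  dist_le : ∀ y z : X, G.dist y z ≤ D
  dist_eq : ∃ y z : X, G.dist y z = D
  p : ℕ → ℕ → ℕ → ℕ
  hp : ∀ h i j : ℕ, h ≤ D → i ≤ D → j ≤ D → ∀ y z : X, G.dist y z = h →
    Nat.card {w : X // G.dist y w = i ∧ G.dist w z = j} = p h i j
  E : ℕ → Matrix X X ℂ
  θ : ℕ → ℝ
  q : ℕ → ℕ → ℕ → ℝ
  hE0 : E 0 = ((Fintype.card X : ℂ))⁻¹ • Matrix.of (fun _ _ => (1 : ℂ))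
  hEsum : ∑ i ∈ Finset.range (D + 1), E i = 1
  hEmul : ∀ i ≤ D, ∀ j ≤ D, E i * E j = if i = j then E i else 0
  hEsym : ∀ i ≤ D, (E i)ᵀ = E i
  hEreal : ∀ i ≤ D, ∀ y z : X, ((E i) y z).im = 0
  hEinM : ∀ i ≤ D, E i ∈ Submodule.span ℂ
    {B : Matrix X X ℂ | ∃ k ≤ D, B = Matrix.of (fun y z => if G.dist y z = k then (1 : ℂ) else 0)}
  hAE : ∀ i ≤ D,
    Matrix.of (fun y z => if G.dist y z = 1 then (1 : ℂ) else 0) * E i = (θ i : ℂ) • E i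
  θ_inj : ∀ i ≤ D, ∀ j ≤ D, θ i = θ j → i = j
  hKrein : ∀ i ≤ D, ∀ j ≤ D, Matrix.hadamard (E i) (E j) =
    ((Fintype.card X : ℂ))⁻¹ • ∑ h ∈ Finset.range (D + 1), (q h i j : ℂ) • E h
  hq_zero : ∀ h ≤ D, ∀ i ≤ D, ∀ j ≤ D, (i + j < h ∨ h + j < i ∨ h + i < j) → q h i j = 0
  hq_ne : ∀ h ≤ D, ∀ i ≤ D, ∀ j ≤ D, (h = i + j ∨ i = h + j ∨ j = h + i) → q h i j ≠ 0

namespace QPolyDRG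

variable {X : Type*} [Fintype X] [DecidableEq X] (S : QPolyDRG X) (x : X)

/-- The `i`-th distance matrix `A_i`. -/
def Amat (i : ℕ) : Matrix X X ℂ :=
  Matrix.of (fun y z => if S.G.dist y z = i then (1 : ℂ) else 0)

/-- The adjacency matrix `A = A_1`. -/
def adj : Matrix X X ℂ := S.Amat 1

/-- The `i`-th dual idempotent `E*_i = E*_i(x)` with respect to the base vertex `x`. -/
def Estar (i : ℕ) : Matrix X X ℂ :=
  Matrix.diagonal (fun y => if S.G.dist x y = i then (1 : ℂ) else 0)

/-- The dual adjacency matrix `A* = A*(x)`, with `(A*)_{yy} = |X| (E_1)_{xy}`. -/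
def Astar : Matrix X X ℂ :=
  Matrix.diagonal (fun y => (Fintype.card X : ℂ) * S.E 1 x y)

/-- The subspace `E_i V` of the standard module, with the convention that it is `0`
for `i ∉ {0, …, D}`. -/
def EV (i : ℤ) : Submodule ℂ (EuclideanSpace ℂ X) :=
  if 0 ≤ i ∧ i ≤ S.D then LinearMap.range (Matrix.toEuclideanLin (S.E i.toNat)) else ⊥

/-- The `i`-th subconstituent `E*_i V` with respect to `x`, with the convention that it is `0`
for `i ∉ {0, …, D}`. -/
def EstarV (i : ℤ) : Submodule ℂ (EuclideanSpace ℂ X) :=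
  if 0 ≤ i ∧ i ≤ S.D then LinearMap.range (Matrix.toEuclideanLin (S.Estar x i.toNat)) else ⊥

/-- The subconstituent (Terwilliger) algebra `T = T(x)`, generated by `A` and `A*`. -/
def Talg : Subalgebra ℂ (Matrix X X ℂ) := Algebra.adjoin ℂ {S.adj, S.Astar x}

/-- A `T`-module: a subspace `W ⊆ V` with `B W ⊆ W` for all `B ∈ T`. -/
def IsTModule (W : Submodule ℂ (EuclideanSpace ℂ X)) : Prop :=
  ∀ B ∈ S.Talg x, ∀ w ∈ W, Matrix.toEuclideanLin B w ∈ W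

/-- An irreducible `T`-module. -/
def IsIrredTModule (W : Submodule ℂ (EuclideanSpace ℂ X)) : Prop :=
  S.IsTModule x W ∧ W ≠ ⊥ ∧ ∀ W' ≤ W, S.IsTModule x W' → W' = ⊥ ∨ W' = W

/-- The subspace `E_i W`, with the convention that it is `0` for `i ∉ {0, …, D}`. -/
def EW (W : Submodule ℂ (EuclideanSpace ℂ X)) (i : ℤ) : Submodule ℂ (EuclideanSpace ℂ X) :=
  if 0 ≤ i ∧ i ≤ S.D then Submodule.map (Matrix.toEuclideanLin (S.E i.toNat)) W else ⊥

/-- The subspace `E*_i W`, with the convention that it is `0` for `i ∉ {0, …, D}`. -/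
def EstarW (W : Submodule ℂ (EuclideanSpace ℂ X)) (i : ℤ) : Submodule ℂ (EuclideanSpace ℂ X) :=
  if 0 ≤ i ∧ i ≤ S.D then Submodule.map (Matrix.toEuclideanLin (S.Estar x i.toNat)) W else ⊥


/-- The endpoint `ρ = min { i : E*_i W ≠ 0 }` of a `T`-module `W`. -/
def endpt (W : Submodule ℂ (EuclideanSpace ℂ X)) : ℕ :=
  sInf {i : ℕ | i ≤ S.D ∧ S.EstarW x W i ≠ ⊥}

/-- The dual endpoint `τ = min { i : E_i W ≠ 0 }` of a `T`-module `W`. -/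
def dualEndpt (W : Submodule ℂ (EuclideanSpace ℂ X)) : ℕ :=
  sInf {i : ℕ | i ≤ S.D ∧ S.EW W i ≠ ⊥}

/-- The diameter `d = |{ i : E*_i W ≠ 0 }| - 1` of a `T`-module `W`. -/
def diam (W : Submodule ℂ (EuclideanSpace ℂ X)) : ℕ :=
  Set.ncard {i : ℕ | i ≤ S.D ∧ S.EstarW x W i ≠ ⊥} - 1

/-- The dual diameter `|{ i : E_i W ≠ 0 }| - 1` of a `T`-module `W`. -/
def dualDiam (W : Submodule ℂ (EuclideanSpace ℂ X)) : ℕ :=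
  Set.ncard {i : ℕ | i ≤ S.D ∧ S.EW W i ≠ ⊥} - 1

/-- The split subspace `W^{μν}_h` of an irreducible `T`-module `W` with endpoint `ρ`,
dual endpoint `τ` and diameter `d`.  Here `μ = false` stands for `↓` and `μ = true`
for `↑`, and similarly for `ν`; e.g.
`W^{↓↓}_h = (E*_ρ W + ⋯ + E*_{ρ+h} W) ∩ (E_τ W + ⋯ + E_{τ+d-h} W)`. -/
def Wsplit (W : Submodule ℂ (EuclideanSpace ℂ X)) (ρ τ d : ℕ) (μ ν : Bool) (h : ℕ) :
    Submodule ℂ (EuclideanSpace ℂ X) :=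
  (if μ then ⨆ k ∈ Finset.Icc (ρ + d - h) (ρ + d), S.EstarW x W k
    else ⨆ k ∈ Finset.Icc ρ (ρ + h), S.EstarW x W k) ⊓
  (if ν then ⨆ k ∈ Finset.Icc (τ + h) (τ + d), S.EW W k
    else ⨆ k ∈ Finset.Icc τ (τ + d - h), S.EW W k)

/-- The subspace `V^{μν}_{i,j}` (interpreted as `0` if `i = -1` or `j = -1`).
Here `μ = false` stands for `↓` and `μ = true` for `↑`, and similarly for `ν`; e.g.
`V^{↓↓}_{i,j} = (E*_0 V + ⋯ + E*_i V) ∩ (E_0 V + ⋯ + E_j V)` and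
`V^{↑↑}_{i,j} = (E*_D V + ⋯ + E*_{D-i} V) ∩ (E_D V + ⋯ + E_{D-j} V)`. -/
def Vsplit (μ ν : Bool) (i j : ℤ) : Submodule ℂ (EuclideanSpace ℂ X) :=
  if 0 ≤ i ∧ 0 ≤ j then
    (if μ then ⨆ k ∈ Finset.Icc (S.D - i.toNat) S.D, S.EstarV x k
      else ⨆ k ∈ Finset.range (i.toNat + 1), S.EstarV x k) ⊓
    (if ν then ⨆ k ∈ Finset.Icc (S.D - j.toNat) S.D, S.EV k
      else ⨆ k ∈ Finset.range (j.toNat + 1), S.EV k)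
  else ⊥

/-- The subspace `Ṽ^{μν}_{i,j}`: the orthogonal complement of
`V^{μν}_{i-1,j} + V^{μν}_{i,j-1}` in `V^{μν}_{i,j}` with respect to the standard
Hermitian form. -/
def tildeV (μ ν : Bool) (i j : ℕ) : Submodule ℂ (EuclideanSpace ℂ X) :=
  S.Vsplit x μ ν i j ⊓ (S.Vsplit x μ ν ((i : ℤ) - 1) j ⊔ S.Vsplit x μ ν i ((j : ℤ) - 1))ᗮ

end QPolyDRG

section Interpolation

open Polynomial

variable {K R ι : Type*} [Field K] [Ring R] [Algebra K R] {s : Finset ι} {e : ι → R}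

theorem aeval_sum_smul_of_orthogonal (he : ∀ i ∈ s, ∀ j ∈ s, i ≠ j → e i * e j = 0)
    (hsum : ∑ i ∈ s, e i = 1) (c : ι → K) (p : K[X]) :
    aeval (∑ i ∈ s, c i • e i) p = ∑ i ∈ s, p.eval (c i) • e i := by
  have hmul (f g : ι → K) :
      (∑ i ∈ s, f i • e i) * (∑ j ∈ s, g j • e j) = ∑ i ∈ s, (f i * g i) • e i := by
    rw [Finset.sum_mul_sum]
    refine Finset.sum_congr rfl fun i hi => ?_
    rw [Finset.sum_eq_single_of_mem i hi fun j hj hji => by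
      rw [smul_mul_smul_comm, he i hi j hj hji.symm, smul_zero]]
    have hidem : e i * e i = e i := by
      conv_rhs => rw [← mul_one (e i), ← hsum, Finset.mul_sum]
      rw [Finset.sum_eq_single_of_mem i hi fun j hj hji => he i hi j hj hji.symm]
    rw [smul_mul_smul_comm, hidem]
  induction p using Polynomial.induction_on with
  | C a => simp [Algebra.algebraMap_eq_smul_one, ← hsum, Finset.smul_sum]
  | add p q hp hq => simp [hp, hq, add_smul, Finset.sum_add_distrib]
  | monomial n a ih =>
    rw [pow_succ, ← mul_assoc, map_mul, ih, aeval_X, hmul]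
    simp [mul_assoc]

theorem mem_adjoin_sum_smul_of_orthogonal (he : ∀ i ∈ s, ∀ j ∈ s, i ≠ j → e i * e j = 0)
    (hsum : ∑ i ∈ s, e i = 1) {c : ι → K} (hc : Set.InjOn c s) {i : ι} (hi : i ∈ s) :
    e i ∈ Algebra.adjoin K {∑ j ∈ s, c j • e j} := by
  classical
  have h := aeval_mem_adjoin_singleton K (∑ j ∈ s, c j • e j) (p := Lagrange.basis s c i)
  have hbasis : ∑ j ∈ s, (Lagrange.basis s c i).eval (c j) • e j = e i := by
    rw [Finset.sum_eq_single_of_mem i hi fun j hj hji => by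
      rw [Lagrange.eval_basis_of_ne hji.symm hj, zero_smul], Lagrange.eval_basis_self hc hi,
      one_smul]
  rwa [aeval_sum_smul_of_orthogonal he hsum, hbasis] at h

end Interpolation

/-- A tridiagonal system in the sense of Ito–Tanabe–Terwilliger, without the irreducibility and
distinct-eigenvalue conditions. -/
structure TDSystem (K V : Type*) [CommRing K] [AddCommGroup V] [Module K V] where
  D : ℕ
  a : Module.End K V
  b : Module.End K V
  P : ℕ → Module.End K V
  Q : ℕ → Module.End K V
  θP : ℕ → K
  θQ : ℕ → K
  sum_P : ∑ i ∈ range (D + 1), P i = 1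
  sum_Q : ∑ i ∈ range (D + 1), Q i = 1
  P_mul_P : ∀ i j, i ≠ j → P i * P j = 0
  Q_mul_Q : ∀ i j, i ≠ j → Q i * Q j = 0
  b_mul_P : ∀ i, b * P i = θP i • P i
  a_mul_Q : ∀ i, a * Q i = θQ i • Q i
  P_mul_a_mul_P : ∀ i j, i + 1 < j ∨ j + 1 < i → P i * a * P j = 0
  Q_mul_b_mul_Q : ∀ i j, i + 1 < j ∨ j + 1 < i → Q i * b * Q j = 0

namespace TDSystem

variable {K V : Type*} [CommRing K] [AddCommGroup V] [Module K V] (T : TDSystem K V)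

def symm : TDSystem K V where
  D := T.D
  a := T.b
  b := T.a
  P := T.Q
  Q := T.P
  θP := T.θQ
  θQ := T.θP
  sum_P := T.sum_Q
  sum_Q := T.sum_P
  P_mul_P := T.Q_mul_Q
  Q_mul_Q := T.P_mul_P
  b_mul_P := T.a_mul_Q
  a_mul_Q := T.b_mul_P
  P_mul_a_mul_P := T.Q_mul_b_mul_Q
  Q_mul_b_mul_Q := T.P_mul_a_mul_P

theorem sum_P_apply (v : V) : ∑ i ∈ range (T.D + 1), T.P i v = v := by
  simpa using congr($(T.sum_P) v)

theorem P_mul_eq_sum (i : ℕ) (f : Module.End K V) :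
    T.P i * f = ∑ j ∈ range (T.D + 1), T.P i * f * T.P j := by
  rw [← Finset.mul_sum, T.sum_P, mul_one]

theorem P_eq_zero_of_lt {i : ℕ} (hi : T.D < i) : T.P i = 0 := by
  rw [← mul_one (T.P i), ← T.sum_P, Finset.mul_sum]
  exact Finset.sum_eq_zero fun j hj => T.P_mul_P i j (by have := Finset.mem_range.1 hj; omega)

theorem P_mul_self (i : ℕ) : T.P i * T.P i = T.P i := by
  by_cases hi : i ≤ T.D
  · conv_rhs => rw [← mul_one (T.P i), ← T.sum_P, Finset.mul_sum]
    rw [Finset.sum_eq_single_of_mem i (mem_range_succ_iff.2 hi)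
      fun j _ hji => T.P_mul_P i j hji.symm]
  · simp [T.P_eq_zero_of_lt (not_le.1 hi)]

theorem P_mul_b (i : ℕ) : T.P i * T.b = T.θP i • T.P i := by
  rw [T.P_mul_eq_sum, Finset.sum_eq_single i]
  · rw [mul_assoc, T.b_mul_P, mul_smul_comm, T.P_mul_self]
  · intro j _ hji
    rw [mul_assoc, T.b_mul_P, mul_smul_comm, T.P_mul_P i j hji.symm, smul_zero]
  · intro hi
    simp [T.P_eq_zero_of_lt (by simpa using hi)]

theorem P_apply_b_apply (i : ℕ) (v : V) : T.P i (T.b v) = T.θP i • T.P i v := by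
  rw [← Module.End.mul_apply, P_mul_b]
  rfl

/-- `∑_{i ∈ s} P i V`, written as an intersection of kernels. -/
def supported (s : Set ℕ) : Submodule K V :=
  ⨅ (i) (_ : i ∉ s), LinearMap.ker (T.P i)

variable {T}

theorem mem_supported {s : Set ℕ} {v : V} : v ∈ T.supported s ↔ ∀ i ∉ s, T.P i v = 0 := by
  simp [supported]

theorem supported_mono {s t : Set ℕ} (h : s ⊆ t) : T.supported s ≤ T.supported t :=
  fun _ hv => mem_supported.2 fun i hi => mem_supported.1 hv i fun his => hi (h his)

theorem supported_inf (s t : Set ℕ) :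
    T.supported s ⊓ T.supported t = T.supported (s ∩ t) := by
  ext v
  simp only [Submodule.mem_inf, mem_supported, Set.mem_inter_iff, not_and_or]
  exact ⟨fun h i hi => hi.elim (h.1 i) (h.2 i), fun h => ⟨fun i hi => h i (.inl hi),
    fun i hi => h i (.inr hi)⟩⟩

variable (T) in
theorem supported_empty : T.supported ∅ = ⊥ :=
  eq_bot_iff.2 fun v hv => by
    rw [Submodule.mem_bot, ← T.sum_P_apply v]
    exact Finset.sum_eq_zero fun i _ => mem_supported.1 hv i (Set.notMem_empty i)

variable (T) in
theorem P_apply_mem_supported (i : ℕ) (v : V) : T.P i v ∈ T.supported {i} :=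
  mem_supported.2 fun j hj => by
    rw [← Module.End.mul_apply, T.P_mul_P j i hj]
    rfl

theorem a_apply_mem_supported {s t : Set ℕ} (hst : ∀ i ∈ s, ∀ j, j ≤ i + 1 → i ≤ j + 1 → j ∈ t)
    {v : V} (hv : v ∈ T.supported s) : T.a v ∈ T.supported t := by
  refine mem_supported.2 fun j hj => ?_
  rw [← Module.End.mul_apply, T.P_mul_eq_sum, LinearMap.sum_apply]
  refine Finset.sum_eq_zero fun i _ => ?_
  by_cases hi : i ∈ s
  · have hfar : j + 1 < i ∨ i + 1 < j := by
      by_contra! h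
      exact hj (hst i hi j h.2 h.1)
    rw [T.P_mul_a_mul_P j i hfar]
    rfl
  · rw [Module.End.mul_apply, mem_supported.1 hv i hi, map_zero]

theorem b_apply_mem_supported {s : Set ℕ} {v : V} (hv : v ∈ T.supported s) :
    T.b v ∈ T.supported s :=
  mem_supported.2 fun i hi => by rw [T.P_apply_b_apply, mem_supported.1 hv i hi, smul_zero]

theorem b_sub_smul_mem_supported {s : Set ℕ} {v : V} (hv : v ∈ T.supported s) (n : ℕ) :
    T.b v - T.θP n • v ∈ T.supported (s \ {n}) := by
  refine mem_supported.2 fun i hi => ?_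
  rw [map_sub, map_smul, T.P_apply_b_apply, ← sub_smul]
  by_cases hin : i = n
  · rw [hin, sub_self, zero_smul]
  · rw [mem_supported.1 hv i fun his => hi ⟨his, hin⟩, smul_zero]

variable (T) in
/-- Irreducibility for the algebra generated by `a` and `b`, which is assumed to contain the
`P i` and `Q i`. -/
structure IsIrreducible (W : Submodule K V) : Prop where
  ne_bot : W ≠ ⊥
  a_mem : ∀ w ∈ W, T.a w ∈ W
  b_mem : ∀ w ∈ W, T.b w ∈ W
  P_mem : ∀ i, ∀ w ∈ W, T.P i w ∈ W
  Q_mem : ∀ i, ∀ w ∈ W, T.Q i w ∈ W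
  eq_bot_or_eq : ∀ U ≤ W, (∀ u ∈ U, T.a u ∈ U) → (∀ u ∈ U, T.b u ∈ U) → U = ⊥ ∨ U = W

theorem IsIrreducible.symm {W : Submodule K V} (hW : T.IsIrreducible W) :
    T.symm.IsIrreducible W where
  ne_bot := hW.ne_bot
  a_mem := hW.b_mem
  b_mem := hW.a_mem
  P_mem := hW.Q_mem
  Q_mem := hW.P_mem
  eq_bot_or_eq U hUW ha hb := hW.eq_bot_or_eq U hUW hb ha

variable (T) in
def supp (W : Submodule K V) : Set ℕ := {i | W.map (T.P i) ≠ ⊥}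

variable {W : Submodule K V}

theorem exists_P_apply_ne_zero {i : ℕ} (hi : i ∈ T.supp W) : ∃ w ∈ W, T.P i w ≠ 0 := by
  obtain ⟨_, ⟨w, hw, rfl⟩, hne⟩ := (Submodule.ne_bot_iff _).1 hi
  exact ⟨w, hw, hne⟩

theorem mem_supported_supp {w : V} (hw : w ∈ W) : w ∈ T.supported (T.supp W) :=
  mem_supported.2 fun i hi => by
    have h := Submodule.mem_map_of_mem (f := T.P i) hw
    rwa [show W.map (T.P i) = ⊥ by simpa [supp] using hi, Submodule.mem_bot] at h

theorem inf_supported_eq_bot {s : Set ℕ} (hs : Disjoint s (T.supp W)) :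
    W ⊓ T.supported s = ⊥ :=
  eq_bot_iff.2 fun w hw => by
    have h := (supported_inf _ _).le ⟨hw.2, mem_supported_supp hw.1⟩
    rwa [hs.inter_eq, supported_empty] at h

theorem supp_subset_Iic : T.supp W ⊆ Set.Iic T.D := fun i hi => by
  by_contra h
  exact hi (by rw [T.P_eq_zero_of_lt (not_le.1 h), Submodule.map_zero])

theorem supp_finite : (T.supp W).Finite :=
  (Set.finite_Iic T.D).subset supp_subset_Iic

theorem supp_nonempty (hW : W ≠ ⊥) : (T.supp W).Nonempty := by
  by_contra h
  refine hW (eq_bot_iff.2 fun w hw => ?_)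
  rw [← T.inf_supported_eq_bot (s := Set.univ)
    (by rw [Set.not_nonempty_iff_eq_empty.1 h]; exact Set.disjoint_empty _)]
  exact ⟨hw, mem_supported.2 fun i hi => (hi trivial).elim⟩

theorem supp_ordConnected (hW : T.IsIrreducible W) : (T.supp W).OrdConnected := by
  refine ⟨fun i hi j hj k hk => ?_⟩
  by_contra hk'
  have hU_a : ∀ w ∈ W ⊓ T.supported (Set.Iio k), T.a w ∈ W ⊓ T.supported (Set.Iio k) := by
    intro w hw
    obtain ⟨hwW, hwk⟩ := Submodule.mem_inf.1 hw
    have haW : T.a w ∈ W := hW.a_mem w hwW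
    have haw : T.a w ∈ T.supported (Set.Iic k) :=
      a_apply_mem_supported (fun i hi j hji _ => Set.mem_Iic.2 (by have := Set.mem_Iio.1 hi; omega)) hwk
    refine Submodule.mem_inf.2 ⟨haW, supported_mono ?_ ((supported_inf _ _).le
      (Submodule.mem_inf.2 ⟨haw, mem_supported_supp haW⟩))⟩
    rintro l ⟨hlk, hl⟩
    exact Set.mem_Iio.2 (lt_of_le_of_ne (Set.mem_Iic.1 hlk) (by rintro rfl; exact hk' hl))
  have hU_b : ∀ w ∈ W ⊓ T.supported (Set.Iio k), T.b w ∈ W ⊓ T.supported (Set.Iio k) := by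
    intro w hw
    obtain ⟨hwW, hwk⟩ := Submodule.mem_inf.1 hw
    exact Submodule.mem_inf.2 ⟨hW.b_mem w hwW, b_apply_mem_supported hwk⟩
  rcases hW.eq_bot_or_eq _ inf_le_left hU_a hU_b with hU | hU
  · obtain ⟨w, hw, hPw⟩ := T.exists_P_apply_ne_zero hi
    have hik : i < k := lt_of_le_of_ne hk.1 (by rintro rfl; exact hk' hi)
    have hPwU : T.P i w ∈ W ⊓ T.supported (Set.Iio k) := Submodule.mem_inf.2
      ⟨hW.P_mem i w hw, supported_mono (by simpa using hik) (T.P_apply_mem_supported i w)⟩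
    exact hPw (by rwa [hU, Submodule.mem_bot] at hPwU)
  · obtain ⟨w, hw, hPw⟩ := T.exists_P_apply_ne_zero hj
    rw [← hU] at hw
    exact hPw (mem_supported.1 (Submodule.mem_inf.1 hw).2 j (not_lt.2 hk.2))

variable (T) in
/-- `W ∩ (P_0 V + ⋯ + P_{ρ+h} V) ∩ (Q_{τ+h} V + ⋯ + Q_D V)`; for `P = E*` and `Q = E` this is
the space `W^{↓↑}_h` of `QPolyDRG.Wsplit`. -/
def layer (W : Submodule K V) (ρ τ h : ℕ) : Submodule K V :=
  W ⊓ T.supported (Set.Iic (ρ + h)) ⊓ T.symm.supported (Set.Ici (τ + h))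

variable {ρ τ : ℕ}

theorem a_sub_smul_mem_layer (hW : T.IsIrreducible W) {h : ℕ} {w : V}
    (hw : w ∈ T.layer W ρ τ h) : T.a w - T.θQ (τ + h) • w ∈ T.layer W ρ τ (h + 1) := by
  obtain ⟨⟨hwW, hwP⟩, hwQ⟩ := hw
  refine ⟨⟨sub_mem (hW.a_mem w hwW) (Submodule.smul_mem _ _ hwW), sub_mem ?_ ?_⟩, ?_⟩
  · exact a_apply_mem_supported (fun i hi j hj _ => by simp only [Set.mem_Iic] at hi ⊢; omega) hwP
  · exact Submodule.smul_mem _ _ (supported_mono (Set.Iic_subset_Iic.2 (by omega)) hwP)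
  · refine supported_mono ?_ (T.symm.b_sub_smul_mem_supported hwQ (τ + h))
    intro j ⟨hj, hjn⟩
    simp only [Set.mem_Ici, Set.mem_singleton_iff] at hj hjn ⊢
    omega

theorem b_sub_smul_mem_layer (hW : T.IsIrreducible W) {h : ℕ} {w : V}
    (hw : w ∈ T.layer W ρ τ (h + 1)) : T.b w - T.θP (ρ + (h + 1)) • w ∈ T.layer W ρ τ h := by
  obtain ⟨⟨hwW, hwP⟩, hwQ⟩ := hw
  refine ⟨⟨sub_mem (hW.b_mem w hwW) (Submodule.smul_mem _ _ hwW), ?_⟩, sub_mem ?_ ?_⟩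
  · refine supported_mono ?_ (b_sub_smul_mem_supported hwP (ρ + (h + 1)))
    intro j ⟨hj, hjn⟩
    simp only [Set.mem_Iic, Set.mem_singleton_iff] at hj hjn ⊢
    omega
  · exact T.symm.a_apply_mem_supported
      (fun i hi j hj _ => by simp only [Set.mem_Ici] at hi ⊢; omega) hwQ
  · exact Submodule.smul_mem _ _ (supported_mono (Set.Ici_subset_Ici.2 (by omega)) hwQ)

theorem b_eq_smul_of_mem_layer_zero (hW : T.IsIrreducible W) (hρ : ρ ∈ lowerBounds (T.supp W))
    {w : V} (hw : w ∈ T.layer W ρ τ 0) : T.b w = T.θP ρ • w := by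
  obtain ⟨⟨hwW, hwP⟩, -⟩ := hw
  have hdisj : Disjoint (Set.Iic ρ \ {ρ}) (T.supp W) :=
    Set.disjoint_left.2 fun i ⟨hi, hiρ⟩ hiW => hiρ (le_antisymm hi (hρ hiW))
  have h0 : T.b w - T.θP ρ • w ∈ W ⊓ T.supported (Set.Iic ρ \ {ρ}) :=
    ⟨sub_mem (hW.b_mem w hwW) (Submodule.smul_mem _ _ hwW), b_sub_smul_mem_supported hwP ρ⟩
  rw [T.inf_supported_eq_bot hdisj, Submodule.mem_bot, sub_eq_zero] at h0
  exact h0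

theorem layer_eq_bot {M h : ℕ} (hM : M ∈ upperBounds (T.symm.supp W)) (hMh : M < τ + h) :
    T.layer W ρ τ h = ⊥ := by
  refine eq_bot_iff.2 fun w hw => ?_
  obtain ⟨⟨hwW, -⟩, hwQ⟩ := hw
  have hdisj : Disjoint (Set.Ici (τ + h)) (T.symm.supp W) :=
    Set.disjoint_left.2 fun j hj hjW => by have := hM hjW; rw [Set.mem_Ici] at hj; omega
  rw [← T.symm.inf_supported_eq_bot hdisj]
  exact ⟨hwW, hwQ⟩

theorem iSup_layer_eq (hW : T.IsIrreducible W) (hρ : IsLeast (T.supp W) ρ)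
    (hτ : τ ∈ lowerBounds (T.symm.supp W)) : ⨆ h, T.layer W ρ τ h = W := by
  have hinvt : ∀ f : Module.End K V, (∀ h, ∀ w ∈ T.layer W ρ τ h, f w ∈ ⨆ h, T.layer W ρ τ h) →
      ∀ w ∈ ⨆ h, T.layer W ρ τ h, f w ∈ ⨆ h, T.layer W ρ τ h := fun f hf w hw =>
    Submodule.iSup_induction _ (motive := fun w => f w ∈ ⨆ h, T.layer W ρ τ h) hw hf
      (by simp) fun u v hu hv => by rw [map_add]; exact add_mem hu hv
  have hU_a := hinvt T.a fun h w hw => by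
    rw [← sub_add_cancel (T.a w) (T.θQ (τ + h) • w)]
    exact add_mem (Submodule.mem_iSup_of_mem (h + 1) (T.a_sub_smul_mem_layer hW hw))
      (Submodule.mem_iSup_of_mem h (Submodule.smul_mem _ _ hw))
  have hU_b := hinvt T.b fun h w hw => by
    cases h with
    | zero =>
      rw [T.b_eq_smul_of_mem_layer_zero hW hρ.2 hw]
      exact Submodule.mem_iSup_of_mem 0 (Submodule.smul_mem _ _ hw)
    | succ h =>
      rw [← sub_add_cancel (T.b w) (T.θP (ρ + (h + 1)) • w)]
      exact add_mem (Submodule.mem_iSup_of_mem h (T.b_sub_smul_mem_layer hW hw))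
        (Submodule.mem_iSup_of_mem (h + 1) (Submodule.smul_mem _ _ hw))
  refine ((hW.eq_bot_or_eq _ (iSup_le fun h => inf_le_left.trans inf_le_left) hU_a
    hU_b).resolve_left fun hbot => ?_)
  obtain ⟨w, hw, hPw⟩ := T.exists_P_apply_ne_zero hρ.1
  have hPW : T.P ρ w ∈ W := hW.P_mem ρ w hw
  have h0 : T.P ρ w ∈ T.layer W ρ τ 0 :=
    ⟨⟨hPW, supported_mono (by simp) (T.P_apply_mem_supported ρ w)⟩,
      supported_mono (fun j hj => hτ hj) (T.symm.mem_supported_supp hPW)⟩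
  exact hPw ((Submodule.mem_bot K).1 (hbot ▸ Submodule.mem_iSup_of_mem 0 h0))

theorem sub_le_sub_of_mem_supp (hW : T.IsIrreducible W) (hρ : IsLeast (T.supp W) ρ)
    (hτ : τ ∈ lowerBounds (T.symm.supp W)) {M : ℕ} (hM : M ∈ upperBounds (T.symm.supp W))
    {i : ℕ} (hi : i ∈ T.supp W) : i - ρ ≤ M - τ := by
  have hW_le : W ≤ T.supported (Set.Iic (ρ + (M - τ))) := by
    rw [← T.iSup_layer_eq hW hρ hτ]
    refine iSup_le fun h => ?_
    by_cases hh : h ≤ M - τ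
    · exact inf_le_left.trans (inf_le_right.trans (supported_mono (Set.Iic_subset_Iic.2
        (by omega))))
    · rw [T.layer_eq_bot hM (by omega)]
      exact bot_le
  obtain ⟨w, hw, hPw⟩ := T.exists_P_apply_ne_zero hi
  by_contra hlt
  exact hPw (mem_supported.1 (hW_le hw) i (by rw [Set.mem_Iic]; omega))

theorem exists_supp_eq_Icc (hW : T.IsIrreducible W) :
    ∃ ρ M, IsLeast (T.supp W) ρ ∧ IsGreatest (T.supp W) M ∧ T.supp W = Set.Icc ρ M := by
  obtain ⟨ρ, hρ, hρ_le⟩ := (T.supp W).exists_min_image id supp_finite (supp_nonempty hW.ne_bot)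
  obtain ⟨M, hM, hM_ge⟩ := (T.supp W).exists_max_image id supp_finite (supp_nonempty hW.ne_bot)
  exact ⟨ρ, M, ⟨hρ, hρ_le⟩, ⟨hM, hM_ge⟩, Set.Subset.antisymm
    (fun i hi => ⟨hρ_le i hi, hM_ge i hi⟩) ((supp_ordConnected hW).out hρ hM)⟩

theorem ncard_supp_eq (hW : T.IsIrreducible W) : (T.supp W).ncard = (T.symm.supp W).ncard := by
  obtain ⟨ρ, Mp, hρ, hMp, hP⟩ := T.exists_supp_eq_Icc hW
  obtain ⟨τ, Mq, hτ, hMq, hQ⟩ := T.symm.exists_supp_eq_Icc hW.symm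
  have h₁ := T.sub_le_sub_of_mem_supp hW hρ hτ.2 hMq.2 hMp.1
  have h₂ := T.symm.sub_le_sub_of_mem_supp hW.symm hτ hρ.2 hMp.2 hMq.1
  have := hρ.2 hMp.1
  have := hτ.2 hMq.1
  rw [hP, hQ, Set.ncard_Icc_nat, Set.ncard_Icc_nat]
  omega

end TDSystem

namespace QPolyDRG

open scoped ComplexOrder

variable {X : Type*} [Fintype X] [DecidableEq X] (S : QPolyDRG X) (x : X)

theorem one_le_D : 1 ≤ S.D :=
  le_trans (by norm_num) S.hD3

theorem E_mul_self {i : ℕ} (hi : i ≤ S.D) : S.E i * S.E i = S.E i := by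
  simpa using S.hEmul i hi i hi

theorem E_apply_comm {i : ℕ} (hi : i ≤ S.D) (y z : X) : S.E i y z = S.E i z y := by
  conv_lhs => rw [← S.hEsym i hi]
  rfl

theorem conjTranspose_E {i : ℕ} (hi : i ≤ S.D) : (S.E i)ᴴ = S.E i := by
  ext y z
  rw [conjTranspose_apply, RCLike.star_def, Complex.conj_eq_iff_im.2 (S.hEreal i hi z y),
    S.E_apply_comm hi]

theorem E_apply_eq_of_dist_eq {i : ℕ} (hi : i ≤ S.D) {y z y' z' : X}
    (hd : S.G.dist y z = S.G.dist y' z') : S.E i y z = S.E i y' z' := by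
  suffices ∀ B ∈ Submodule.span ℂ {B : Matrix X X ℂ | ∃ k ≤ S.D,
      B = Matrix.of (fun y z => if S.G.dist y z = k then (1 : ℂ) else 0)}, B y z = B y' z' from
    this _ (S.hEinM i hi)
  intro B hB
  induction hB using Submodule.span_induction with
  | mem B hB =>
    obtain ⟨k, -, rfl⟩ := hB
    simp [hd]
  | zero => rfl
  | add B C _ _ hB hC => rw [Matrix.add_apply, Matrix.add_apply, hB, hC]
  | smul c B _ hB => rw [Matrix.smul_apply, Matrix.smul_apply, hB]

/-- The norm identity behind the Krein conditions: for `c ∈ E_h V`,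
`‖E_i diag(c) E_j‖² = |X|⁻¹ q^h_{ij} ‖c‖²`. -/
theorem trace_E_diagonal_E {i j h : ℕ} (hi : i ≤ S.D) (hj : j ≤ S.D) (hh : h ≤ S.D)
    {c : X → ℂ} (hc : S.E h *ᵥ c = c) :
    ((S.E i * diagonal c * S.E j)ᴴ * (S.E i * diagonal c * S.E j)).trace =
      (Fintype.card X : ℂ)⁻¹ * S.q h i j * (star c ⬝ᵥ c) := by
  have hcyc : ((S.E i * diagonal c * S.E j)ᴴ * (S.E i * diagonal c * S.E j)).trace =
      (diagonal (star c) * S.E i * (S.E j * diagonal c)ᵀ).trace := by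
    rw [conjTranspose_mul, conjTranspose_mul, S.conjTranspose_E hi, S.conjTranspose_E hj,
      diagonal_conjTranspose, transpose_mul, diagonal_transpose, S.hEsym j hj]
    simp only [Matrix.mul_assoc, ← Matrix.mul_assoc (S.E i) (S.E i), S.E_mul_self hi]
    rw [trace_mul_comm (S.E j)]
    simp only [Matrix.mul_assoc, S.E_mul_self hj]
  have hEc (g : ℕ) (hg : g ∈ range (S.D + 1)) : (S.q g i j : ℂ) • S.E g *ᵥ c =
      if g = h then (S.q h i j : ℂ) • c else 0 := by
    rw [← hc, mulVec_mulVec, S.hEmul g (mem_range_succ_iff.1 hg) h hh]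
    split_ifs with hgh <;> simp [hgh]
  rw [hcyc, ← dotProduct_vecMul_hadamard, ← dotProduct_mulVec, S.hKrein i hi j hj, smul_mulVec,
    sum_mulVec]
  simp_rw [smul_mulVec]
  rw [Finset.sum_congr rfl hEc, Finset.sum_ite_eq', if_pos (mem_range_succ_iff.2 hh),
    dotProduct_smul, dotProduct_smul, smul_eq_mul, smul_eq_mul, mul_assoc]

theorem E_diagonal_E_eq_zero {i j h : ℕ} (hi : i ≤ S.D) (hj : j ≤ S.D) (hh : h ≤ S.D)
    (hq : S.q h i j = 0) {c : X → ℂ} (hc : S.E h *ᵥ c = c) :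
    S.E i * diagonal c * S.E j = 0 :=
  trace_conjTranspose_mul_self_eq_zero_iff.1 (by rw [S.trace_E_diagonal_E hi hj hh hc, hq]; simp)

theorem E_diagonal_E_ne_zero {i j h : ℕ} (hi : i ≤ S.D) (hj : j ≤ S.D) (hh : h ≤ S.D)
    (hq : S.q h i j ≠ 0) {c : X → ℂ} (hc : S.E h *ᵥ c = c) (hc0 : c ≠ 0) :
    S.E i * diagonal c * S.E j ≠ 0 := fun h0 => by
  have htr := S.trace_E_diagonal_E hi hj hh hc
  have := S.conn.nonempty
  simp [h0, hq, hc0] at htr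

theorem E_ne_zero {i : ℕ} (hi : i ≤ S.D) : S.E i ≠ 0 := by
  induction i with
  | zero =>
    have := S.conn.nonempty
    rw [S.hE0]
    simp [← Matrix.ext_iff]
  | succ n ih =>
    obtain ⟨v, hv⟩ : ∃ v, S.E n *ᵥ v ≠ 0 := by
      by_contra! h
      exact ih (by omega) (mulVec_injective (funext fun v => by simpa using h v))
    have hq : S.q n 1 (n + 1) ≠ 0 := S.hq_ne n (by omega) 1 (by omega) (n + 1) hi (by omega)
    have hc : S.E n *ᵥ (S.E n *ᵥ v) = S.E n *ᵥ v := by rw [mulVec_mulVec, S.E_mul_self (by omega)]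
    intro h0
    exact S.E_diagonal_E_ne_zero (by omega) hi (by omega) hq hc hv (by rw [h0, Matrix.mul_zero])

theorem E_apply_self_ne_zero {i : ℕ} (hi : i ≤ S.D) : S.E i x x ≠ 0 := by
  have htr : ((S.E i)ᴴ * S.E i).trace = Fintype.card X * S.E i x x := by
    have hdiag (y : X) : S.E i y y = S.E i x x := S.E_apply_eq_of_dist_eq hi (by simp)
    simp [S.conjTranspose_E hi, S.E_mul_self hi, trace, hdiag]
  intro h0
  rw [h0, mul_zero, trace_conjTranspose_mul_self_eq_zero_iff] at htr
  exact S.E_ne_zero hi htr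

/-- The dual eigenvalue `θ*_i`: the common value of `|X| (E_1)_{xy}` over the `y` with
`∂(x, y) = i` (junk `0` if there is no such `y`). -/
def dualEigenval (i : ℕ) : ℂ :=
  if h : ∃ y, S.G.dist x y = i then Fintype.card X * S.E 1 x h.choose else 0

theorem dualEigenval_dist (y : X) :
    S.dualEigenval x (S.G.dist x y) = Fintype.card X * S.E 1 x y := by
  have h : ∃ z, S.G.dist x z = S.G.dist x y := ⟨y, rfl⟩
  rw [dualEigenval, dif_pos h, S.E_apply_eq_of_dist_eq S.one_le_D h.choose_spec]

theorem Astar_eq_diagonal : S.Astar x = diagonal fun y => S.dualEigenval x (S.G.dist x y) := by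
  simp only [Astar, dualEigenval_dist]

theorem star_col_dotProduct_col {i j : ℕ} (hi : i ≤ S.D) (hj : j ≤ S.D) :
    star ((S.E i).col x) ⬝ᵥ (S.E j).col x = if i = j then S.E i x x else 0 := by
  have h : star ((S.E i).col x) ⬝ᵥ (S.E j).col x = (S.E i * S.E j) x x := by
    simp only [dotProduct, mul_apply, Pi.star_apply, col_apply, RCLike.star_def]
    refine Finset.sum_congr rfl fun y _ => ?_
    rw [Complex.conj_eq_iff_im.2 (S.hEreal i hi y x), S.E_apply_comm hi]
  rw [h, S.hEmul i hi j hj]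
  split_ifs <;> rfl

theorem diag_Astar_mul_col {j : ℕ} (hj : j ≤ S.D) :
    (S.Astar x).diag * (S.E j).col x = ∑ g ∈ range (S.D + 1), (S.q g 1 j : ℂ) • (S.E g).col x := by
  ext y
  have hK := congr($(S.hKrein 1 S.one_le_D j hj) y x)
  simp only [hadamard_apply, Matrix.smul_apply, Matrix.sum_apply, smul_eq_mul] at hK
  simp only [Astar, diag_diagonal, Pi.mul_apply, col_apply, Finset.sum_apply, Pi.smul_apply,
    smul_eq_mul]
  rw [S.E_apply_comm S.one_le_D x y, mul_assoc, hK, ← mul_assoc,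
    mul_inv_cancel₀ (by have := S.conn.nonempty; exact_mod_cast Fintype.card_ne_zero), one_mul]

def colSpan (m : ℕ) : Submodule ℂ (X → ℂ) :=
  Submodule.span ℂ ((fun g => (S.E g).col x) '' Set.Iio m)

section Columns

variable {S x}

theorem col_mem_colSpan {g m : ℕ} (h : g < m) : (S.E g).col x ∈ S.colSpan x m :=
  Submodule.subset_span ⟨g, h, rfl⟩

theorem colSpan_mono {m n : ℕ} (h : m ≤ n) : S.colSpan x m ≤ S.colSpan x n :=
  Submodule.span_mono (Set.image_mono (Set.Iio_subset_Iio h))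

theorem col_notMem_colSpan {m : ℕ} (hm : m ≤ S.D) : (S.E m).col x ∉ S.colSpan x m := by
  suffices ∀ v ∈ S.colSpan x m, star ((S.E m).col x) ⬝ᵥ v = 0 from fun h => by
    simpa [S.star_col_dotProduct_col x hm hm, S.E_apply_self_ne_zero x hm] using this _ h
  intro v hv
  induction hv using Submodule.span_induction with
  | mem _ hv =>
    obtain ⟨g, hg, rfl⟩ := hv
    have := Set.mem_Iio.1 hg
    rw [S.star_col_dotProduct_col x hm (by omega), if_neg (by omega)]
  | zero => simp
  | add _ _ _ _ hu hv => rw [dotProduct_add, hu, hv, add_zero]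
  | smul _ _ _ hv => rw [dotProduct_smul, hv, smul_zero]

theorem diag_Astar_mul_col_sub_mem {j : ℕ} (hj : j + 1 ≤ S.D) :
    (S.Astar x).diag * (S.E j).col x - (S.q (j + 1) 1 j : ℂ) • (S.E (j + 1)).col x ∈
      S.colSpan x (j + 1) := by
  rw [S.diag_Astar_mul_col x (by omega), ← Finset.add_sum_erase _ _ (mem_range_succ_iff.2 hj),
    add_sub_cancel_left]
  refine Submodule.sum_mem _ fun g hg => ?_
  obtain ⟨hgj, hg⟩ := Finset.mem_erase.1 hg
  by_cases hlt : g < j + 1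
  · exact Submodule.smul_mem _ _ (col_mem_colSpan hlt)
  · rw [S.hq_zero g (mem_range_succ_iff.1 hg) 1 (by omega) j (by omega) (.inl (by omega))]
    simp

theorem diag_Astar_mul_mem_colSpan {m : ℕ} (hm : m ≤ S.D) {v : X → ℂ}
    (hv : v ∈ S.colSpan x m) : (S.Astar x).diag * v ∈ S.colSpan x (m + 1) := by
  induction hv using Submodule.span_induction with
  | mem _ hv =>
    obtain ⟨g, hg, rfl⟩ := hv
    simp only [Set.mem_Iio] at hg
    rw [← sub_add_cancel ((S.Astar x).diag * _) ((S.q (g + 1) 1 g : ℂ) • (S.E (g + 1)).col x)]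
    exact add_mem (colSpan_mono (by omega) (diag_Astar_mul_col_sub_mem (by omega)))
      (Submodule.smul_mem _ _ (col_mem_colSpan (by omega)))
  | zero => simp
  | add _ _ _ _ hu hv => rw [mul_add]; exact add_mem hu hv
  | smul _ _ _ hv => rw [mul_smul_comm]; exact Submodule.smul_mem _ _ hv

theorem exists_prod_mul_col_zero_sub_mem (t : ℕ → ℂ) (s : Finset ℕ) (hs : s.card ≤ S.D) :
    ∃ γ : ℂ, γ ≠ 0 ∧ (∏ k ∈ s, ((S.Astar x).diag - fun _ => t k)) * (S.E 0).col x -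
      γ • (S.E s.card).col x ∈ S.colSpan x s.card := by
  induction s using Finset.induction_on with
  | empty => exact ⟨1, one_ne_zero, by simp⟩
  | insert a s ha ih =>
    rw [Finset.card_insert_of_notMem ha] at hs ⊢
    obtain ⟨γ, hγ, hmem⟩ := ih (by omega)
    refine ⟨γ * S.q (s.card + 1) 1 s.card,
      mul_ne_zero hγ (by exact_mod_cast S.hq_ne _ hs 1 (by omega) _ (by omega) (.inl (by omega))),
      ?_⟩
    set w := (∏ k ∈ s, ((S.Astar x).diag - fun _ => t k)) * (S.E 0).col x -
      γ • (S.E s.card).col x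
    have key : (∏ k ∈ insert a s, ((S.Astar x).diag - fun _ => t k)) * (S.E 0).col x -
        (γ * S.q (s.card + 1) 1 s.card) • (S.E (s.card + 1)).col x =
        γ • ((S.Astar x).diag * (S.E s.card).col x -
          (S.q (s.card + 1) 1 s.card : ℂ) • (S.E (s.card + 1)).col x) -
        (γ * t a) • (S.E s.card).col x + ((S.Astar x).diag * w - t a • w) := by
      ext y
      simp only [w, Finset.prod_insert ha, Pi.mul_apply, Pi.sub_apply, Pi.add_apply,
        Pi.smul_apply, smul_eq_mul]
      ring
    rw [key]
    refine add_mem (sub_mem (Submodule.smul_mem _ _ ?_) (Submodule.smul_mem _ _ ?_))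
      (sub_mem ?_ (Submodule.smul_mem _ _ ?_))
    · exact diag_Astar_mul_col_sub_mem hs
    · exact col_mem_colSpan (Nat.lt_succ_self _)
    · exact diag_Astar_mul_mem_colSpan (by omega) hmem
    · exact colSpan_mono (Nat.le_succ _) hmem

end Columns

/-- If `θ*_i = θ*_j` with `i ≠ j`, a product of `D` factors `A* - θ*_k` would vanish; but applied
to `E_0 x̂` it has a nonzero `E_D x̂`-component, since `A*` raises `E_k x̂` to `E_{k+1} x̂` with the
coefficient `q^{k+1}_{1k} ≠ 0`. -/
theorem dualEigenval_injOn : Set.InjOn (S.dualEigenval x) (range (S.D + 1)) := by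
  intro i hi j hj hij
  by_contra hne
  simp only [coe_range, Set.mem_Iio] at hi hj
  have hcard : ((range (S.D + 1)).erase j).card = S.D := by simp [card_erase_of_mem, hj]
  obtain ⟨γ, hγ, hmem⟩ :=
    exists_prod_mul_col_zero_sub_mem (x := x) (S.dualEigenval x) _ hcard.le
  have hprod : ∏ k ∈ (range (S.D + 1)).erase j, ((S.Astar x).diag - fun _ => S.dualEigenval x k)
      = 0 := by
    ext y
    rw [Finset.prod_apply]
    have hy := S.dist_le x y
    refine Finset.prod_eq_zero (i := if S.G.dist x y = j then i else S.G.dist x y) ?_ ?_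
    · split_ifs with h
      · exact Finset.mem_erase.2 ⟨hne, by simpa using hi⟩
      · exact Finset.mem_erase.2 ⟨h, by simpa using Nat.lt_succ_of_le hy⟩
    · rw [Astar_eq_diagonal]
      split_ifs with h <;> simp [h, hij]
  rw [hprod, zero_mul, zero_sub, neg_mem_iff, hcard] at hmem
  exact col_notMem_colSpan le_rfl ((Submodule.smul_mem_iff _ hγ).1 hmem)

theorem Estar_mul_Estar {i j : ℕ} (h : i ≠ j) : S.Estar x i * S.Estar x j = 0 := by
  rw [Estar, Estar, diagonal_mul_diagonal, ← diagonal_zero]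
  congr 1
  funext y
  split_ifs <;> simp_all

theorem sum_Estar : ∑ i ∈ range (S.D + 1), S.Estar x i = 1 := by
  ext y z
  rw [Matrix.sum_apply]
  by_cases hyz : y = z
  · subst hyz
    simp [Estar, Nat.lt_succ_of_le (S.dist_le x y)]
  · simp [Estar, hyz]

theorem Astar_mul_Estar (i : ℕ) : S.Astar x * S.Estar x i = S.dualEigenval x i • S.Estar x i := by
  rw [Astar_eq_diagonal, Estar, diagonal_mul_diagonal, ← diagonal_smul]
  congr 1
  funext y
  split_ifs with h <;> simp [h]

theorem Astar_eq_sum : S.Astar x = ∑ i ∈ range (S.D + 1), S.dualEigenval x i • S.Estar x i := by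
  rw [← Finset.sum_congr rfl fun i _ => S.Astar_mul_Estar x i, ← Finset.mul_sum, sum_Estar,
    mul_one]

theorem adj_eq_sum : S.adj = ∑ i ∈ range (S.D + 1), (S.θ i : ℂ) • S.E i := by
  rw [← Finset.sum_congr rfl fun i hi => S.hAE i (mem_range_succ_iff.1 hi),
    ← Finset.mul_sum, S.hEsum, mul_one]
  rfl

theorem Estar_mul_adj_mul_Estar {i j : ℕ} (h : i + 1 < j ∨ j + 1 < i) :
    S.Estar x i * S.adj * S.Estar x j = 0 := by
  ext y z
  simp only [Estar, adj, Amat, mul_diagonal, diagonal_mul, of_apply, Matrix.zero_apply]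
  split_ifs with hy hz hyz <;> try simp
  have t1 := S.conn.dist_triangle (u := x) (v := y) (w := z)
  have t2 := S.conn.dist_triangle (u := x) (v := z) (w := y)
  rw [SimpleGraph.dist_comm (u := z)] at t2
  omega

theorem E_mul_Astar_mul_E {i j : ℕ} (hi : i ≤ S.D) (hj : j ≤ S.D) (h : i + 1 < j ∨ j + 1 < i) :
    S.E i * S.Astar x * S.E j = 0 := by
  have h1 := S.one_le_D
  have hA : S.Astar x = (Fintype.card X : ℂ) • diagonal (S.E 1 *ᵥ Pi.single x 1) := by
    rw [Astar, ← diagonal_smul]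
    congr 1
    funext y
    simp [S.E_apply_comm h1 x y]
  have hc : S.E 1 *ᵥ (S.E 1 *ᵥ Pi.single x 1) = S.E 1 *ᵥ Pi.single x 1 := by
    rw [mulVec_mulVec, S.E_mul_self h1]
  rw [hA, Matrix.mul_smul, Matrix.smul_mul, S.E_diagonal_E_eq_zero hi hj h1
    (S.hq_zero 1 h1 i hi j hj (by omega)) hc, smul_zero]

theorem E_mem_Talg {i : ℕ} (hi : i ≤ S.D) : S.E i ∈ S.Talg x := by
  have h := mem_adjoin_sum_smul_of_orthogonal (s := range (S.D + 1)) (e := S.E)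
    (fun i hi j hj hij => by
      rw [S.hEmul i (mem_range_succ_iff.1 hi) j (mem_range_succ_iff.1 hj), if_neg hij])
    S.hEsum (c := fun i => (S.θ i : ℂ))
    (fun i hi j hj hij => S.θ_inj i (mem_range_succ_iff.1 hi) j (mem_range_succ_iff.1 hj)
      (Complex.ofReal_injective hij))
    (mem_range_succ_iff.2 hi)
  rw [← adj_eq_sum] at h
  exact Algebra.adjoin_mono (by simp [adj]) h

theorem Estar_mem_Talg (i : ℕ) : S.Estar x i ∈ S.Talg x := by
  by_cases hi : i ≤ S.D
  · have h := mem_adjoin_sum_smul_of_orthogonal (s := range (S.D + 1)) (e := S.Estar x)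
      (fun i _ j _ hij => S.Estar_mul_Estar x hij) (S.sum_Estar x) (S.dualEigenval_injOn x)
      (mem_range_succ_iff.2 hi)
    rw [← Astar_eq_sum] at h
    exact Algebra.adjoin_mono (by simp) h
  · convert zero_mem (S.Talg x)
    ext y z
    have := S.dist_le x y
    simp [Estar, diagonal_apply]
    omega

theorem isTModule_of_forall_mem {U : Submodule ℂ (EuclideanSpace ℂ X)}
    (ha : ∀ u ∈ U, toEuclideanLin S.adj u ∈ U) (hb : ∀ u ∈ U, toEuclideanLin (S.Astar x) u ∈ U) :
    S.IsTModule x U := by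
  intro B hB
  induction hB using Algebra.adjoin_induction with
  | mem B hB =>
    rcases hB with rfl | rfl
    exacts [ha, hb]
  | algebraMap r => intro u hu; simpa [Algebra.algebraMap_eq_smul_one] using U.smul_mem r hu
  | add B C _ _ hB hC => intro u hu; simpa using add_mem (hB u hu) (hC u hu)
  | mul B C _ _ hB hC => intro u hu; simpa using hB _ (hC u hu)

/-- The primitive idempotents `E_i` are extended by `0` beyond `D`. -/
def tdSystem : TDSystem ℂ (EuclideanSpace ℂ X) where
  D := S.D
  a := toLpLinAlgEquiv 2 S.adj
  b := toLpLinAlgEquiv 2 (S.Astar x)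
  P i := toLpLinAlgEquiv 2 (S.Estar x i)
  Q i := if i ≤ S.D then toLpLinAlgEquiv 2 (S.E i) else 0
  θP := S.dualEigenval x
  θQ i := S.θ i
  sum_P := by rw [← map_sum, sum_Estar, map_one]
  sum_Q := by
    rw [Finset.sum_congr rfl fun i hi => if_pos (mem_range_succ_iff.1 hi), ← map_sum,
      S.hEsum, map_one]
  P_mul_P i j h := by rw [← map_mul, S.Estar_mul_Estar x h, map_zero]
  Q_mul_Q i j h := by
    split_ifs with hi hj
    · rw [← map_mul, S.hEmul i hi j hj, if_neg h, map_zero]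
    all_goals simp
  b_mul_P i := by rw [← map_mul, Astar_mul_Estar, map_smul]
  a_mul_Q i := by
    split_ifs with hi
    · rw [← map_mul, adj, Amat, S.hAE i hi, map_smul]
    · simp
  P_mul_a_mul_P i j h := by rw [← map_mul, ← map_mul, S.Estar_mul_adj_mul_Estar x h, map_zero]
  Q_mul_b_mul_Q i j h := by
    split_ifs with hi hj
    · rw [← map_mul, ← map_mul, S.E_mul_Astar_mul_E x hi hj h, map_zero]
    all_goals simp

theorem isIrreducible_tdSystem {W : Submodule ℂ (EuclideanSpace ℂ X)}
    (hW : S.IsIrredTModule x W) : (S.tdSystem x).IsIrreducible W where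
  ne_bot := hW.2.1
  a_mem := hW.1 _ (Algebra.subset_adjoin (by simp))
  b_mem := hW.1 _ (Algebra.subset_adjoin (by simp))
  P_mem i := hW.1 _ (S.Estar_mem_Talg x i)
  Q_mem i w hw := by
    dsimp only [tdSystem]
    split_ifs with hi
    exacts [hW.1 _ (S.E_mem_Talg x hi) w hw, W.zero_mem]
  eq_bot_or_eq U hUW ha hb := hW.2.2 U hUW (S.isTModule_of_forall_mem x ha hb)

theorem setOf_EstarW_ne_bot (W : Submodule ℂ (EuclideanSpace ℂ X)) :
    {i : ℕ | i ≤ S.D ∧ S.EstarW x W i ≠ ⊥} = (S.tdSystem x).supp W := by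
  ext i
  by_cases hi : i ≤ S.D
  · have h : S.EstarW x W i = W.map (toEuclideanLin (S.Estar x i)) := by simp [EstarW, hi]
    simp only [Set.mem_ofPred_eq, hi, true_and, h]
    rfl
  · simp only [Set.mem_ofPred_eq, hi, false_and, false_iff]
    exact fun h => hi (TDSystem.supp_subset_Iic h)

theorem setOf_EW_ne_bot (W : Submodule ℂ (EuclideanSpace ℂ X)) :
    {i : ℕ | i ≤ S.D ∧ S.EW W i ≠ ⊥} = (S.tdSystem x).symm.supp W := by
  ext i
  by_cases hi : i ≤ S.D
  · have h : S.EW W i = W.map (toEuclideanLin (S.E i)) := by simp [EW, hi]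
    simp only [Set.mem_ofPred_eq, hi, true_and, h, TDSystem.supp, TDSystem.symm, tdSystem]
    rfl
  · simp only [Set.mem_ofPred_eq, hi, false_and, false_iff]
    exact fun h => hi (TDSystem.supp_subset_Iic h)

end QPolyDRG

open QPolyDRG in
/-- The diameter of an irreducible `T`-module equals its dual diameter:
`|{i : 0 ≤ i ≤ D, E*_i W ≠ 0}| = |{i : 0 ≤ i ≤ D, E_i W ≠ 0}|`. -/
theorem drg_diam_eq_dualDiam {X : Type*} [Fintype X] [DecidableEq X] (S : QPolyDRG X) (x : X)
    (W : Submodule ℂ (EuclideanSpace ℂ X)) (hW : S.IsIrredTModule x W) :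
    Set.ncard {i : ℕ | i ≤ S.D ∧ S.EstarW x W i ≠ ⊥} =
      Set.ncard {i : ℕ | i ≤ S.D ∧ S.EW W i ≠ ⊥} := by
  rw [S.setOf_EstarW_ne_bot x, S.setOf_EW_ne_bot x]
  exact (S.tdSystem x).ncard_supp_eq (S.isIrreducible_tdSystem x hW)

end
end

section
/- With the Q-polynomial distance-regular graph setup, let W be an irreducible T-module with endpoint ρ, dual endpoint τ, and diameter d. Then for 0 ≤ h,ℓ ≤ d with h + ℓ ≠ d: (i) W^{↓↓}_h and W^{↑↑}_ℓ are orthogonal with respect to the standard Hermitian form; (ii) W^{↓↑}_h and W^{↑↓}_ℓ are orthogonal with respect to the standard Hermitian form. -/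
noncomputable section

open Matrix Finset
open scoped ComplexInnerProductSpace

/-! The split subspaces `W^{↓·}_h` and `W^{↑·}_ℓ` lie in sums of the pairwise orthogonal
subspaces `E*_i W` over the index ranges `[ρ, ρ + h]` and `[ρ + d - ℓ, ρ + d]`, which are disjoint
when `h + ℓ < d`; dually, `W^{·↓}_h` and `W^{·↑}_ℓ` lie in sums of the pairwise orthogonal `E_i W`
over `[τ, τ + d - h]` and `[τ + ℓ, τ + d]`, which are disjoint when `h + ℓ > d`. -/

theorem Submodule.isOrtho_biSup_of_disjoint {𝕜 E ι : Type*} [RCLike 𝕜] [NormedAddCommGroup E]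
    [InnerProductSpace 𝕜 E] {V : ι → Submodule 𝕜 E} (hV : Pairwise fun i j => V i ⟂ V j)
    {s t : Finset ι} (hst : Disjoint s t) :
    (⨆ i ∈ s, V i) ⟂ ⨆ j ∈ t, V j := by
  simp only [Submodule.isOrtho_iSup_left, Submodule.isOrtho_iSup_right]
  intro j hj i hi
  exact hV (ne_of_mem_of_not_mem hi (Finset.disjoint_left.mp hst.symm hj))

theorem Matrix.isOrtho_range_toEuclideanLin {𝕜 n : Type*} [RCLike 𝕜] [Fintype n] [DecidableEq n]
    {M N : Matrix n n 𝕜} (hMN : Mᴴ * N = 0) :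
    LinearMap.range (Matrix.toEuclideanLin M) ⟂ LinearMap.range (Matrix.toEuclideanLin N) := by
  rw [Submodule.isOrtho_iff_inner_eq]
  rintro _ ⟨v, rfl⟩ _ ⟨w, rfl⟩
  rw [← Matrix.conjTranspose_conjTranspose M, Matrix.toEuclideanLin_conjTranspose_eq_adjoint,
    LinearMap.adjoint_inner_left, ← LinearMap.comp_apply, ← Matrix.toLpLin_mul_same, hMN, map_zero,
    LinearMap.zero_apply, inner_zero_right]

namespace QPolyDRG

variable {X : Type*} [Fintype X] [DecidableEq X] (S : QPolyDRG X) (x : X)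

theorem Estar_isHermitian (i : ℕ) : (S.Estar x i).IsHermitian :=
  Matrix.isHermitian_diagonal_of_self_adjoint _ <| by
    ext y
    split_ifs <;> simp_all

theorem Estar_mul_Estar_of_ne {i j : ℕ} (hij : i ≠ j) : S.Estar x i * S.Estar x j = 0 := by
  rw [Estar, Estar, Matrix.diagonal_mul_diagonal, ← Matrix.diagonal_zero]
  congr 1
  funext y
  split_ifs <;> simp_all

theorem E_isHermitian {i : ℕ} (hi : i ≤ S.D) : (S.E i).IsHermitian := by
  ext y z
  rw [Matrix.conjTranspose_apply, ← Matrix.transpose_apply (S.E i), S.hEsym i hi]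
  exact Complex.conj_eq_iff_im.mpr (S.hEreal i hi y z)

variable (W : Submodule ℂ (EuclideanSpace ℂ X))

theorem EstarW_isOrtho {i j : ℤ} (hij : i ≠ j) : S.EstarW x W i ⟂ S.EstarW x W j := by
  unfold EstarW
  split_ifs
  · refine (Matrix.isOrtho_range_toEuclideanLin ?_).mono LinearMap.map_le_range
      LinearMap.map_le_range
    rw [S.Estar_isHermitian x, S.Estar_mul_Estar_of_ne x (by omega)]
  all_goals first | exact Submodule.isOrtho_bot_left | exact Submodule.isOrtho_bot_right

theorem EW_isOrtho {i j : ℤ} (hij : i ≠ j) : S.EW W i ⟂ S.EW W j := by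
  unfold EW
  split_ifs
  · refine (Matrix.isOrtho_range_toEuclideanLin ?_).mono LinearMap.map_le_range
      LinearMap.map_le_range
    rw [S.E_isHermitian (by omega), S.hEmul _ (by omega) _ (by omega), if_neg (by omega)]
  all_goals first | exact Submodule.isOrtho_bot_left | exact Submodule.isOrtho_bot_right

theorem Wsplit_isOrtho_of_add_lt {ρ τ d h l : ℕ} (hhl : h + l < d) (ν ν' : Bool) :
    S.Wsplit x W ρ τ d false ν h ⟂ S.Wsplit x W ρ τ d true ν' l := by
  refine (Submodule.isOrtho_biSup_of_disjoint (V := fun k : ℕ => S.EstarW x W k)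
    (fun i j hij => S.EstarW_isOrtho x W (Nat.cast_injective.ne hij)) ?_).mono inf_le_left
      inf_le_left
  rw [Finset.disjoint_left]
  intro k hk hk'
  simp only [Finset.mem_Icc] at hk hk'
  omega

theorem Wsplit_isOrtho_of_lt_add {ρ τ d h l : ℕ} (hhl : d < h + l) (hh : h ≤ d) (μ μ' : Bool) :
    S.Wsplit x W ρ τ d μ false h ⟂ S.Wsplit x W ρ τ d μ' true l := by
  refine (Submodule.isOrtho_biSup_of_disjoint (V := fun k : ℕ => S.EW W k)
    (fun i j hij => S.EW_isOrtho W (Nat.cast_injective.ne hij)) ?_).mono inf_le_right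
      inf_le_right
  rw [Finset.disjoint_left]
  intro k hk hk'
  simp only [Finset.mem_Icc] at hk hk'
  omega

end QPolyDRG

open QPolyDRG in
theorem drg_tmodule_split_orth_general {X : Type*} [Fintype X] [DecidableEq X] (S : QPolyDRG X) (x : X)
    (W : Submodule ℂ (EuclideanSpace ℂ X))
    (ρ τ d : ℕ) :
    ∀ h : ℕ, h ≤ d → ∀ l : ℕ, l ≤ d → h + l ≠ d →
      (∀ u ∈ S.Wsplit x W ρ τ d false false h, ∀ v ∈ S.Wsplit x W ρ τ d true true l,
        ⟪u, v⟫ = 0) ∧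
      (∀ u ∈ S.Wsplit x W ρ τ d false true h, ∀ v ∈ S.Wsplit x W ρ τ d true false l,
        ⟪u, v⟫ = 0) := by
  intro h hh l hl hne
  rcases lt_or_gt_of_ne hne with hlt | hgt
  · exact ⟨fun _ hu _ hv => (S.Wsplit_isOrtho_of_add_lt x W hlt _ _).inner_eq hu hv,
      fun _ hu _ hv => (S.Wsplit_isOrtho_of_add_lt x W hlt _ _).inner_eq hu hv⟩
  · exact ⟨fun _ hu _ hv => (S.Wsplit_isOrtho_of_lt_add x W hgt hh _ _).inner_eq hu hv,
      fun _ hu _ hv => (S.Wsplit_isOrtho_of_lt_add x W (by omega) hl _ _).symm.inner_eq hu hv⟩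

open QPolyDRG in
/-- For an irreducible `T`-module `W` and `0 ≤ h, ℓ ≤ d` with `h + ℓ ≠ d`:
`W^{↓↓}_h ⊥ W^{↑↑}_ℓ` and `W^{↓↑}_h ⊥ W^{↑↓}_ℓ` with respect to the standard
Hermitian form. -/
theorem drg_tmodule_split_orth {X : Type*} [Fintype X] [DecidableEq X] (S : QPolyDRG X) (x : X)
    (W : Submodule ℂ (EuclideanSpace ℂ X)) (hW : S.IsIrredTModule x W)
    (ρ τ d : ℕ)
    (hρ : IsLeast {i : ℕ | i ≤ S.D ∧ S.EstarW x W i ≠ ⊥} ρ)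
    (hτ : IsLeast {i : ℕ | i ≤ S.D ∧ S.EW W i ≠ ⊥} τ)
    (hd : d + 1 = Set.ncard {i : ℕ | i ≤ S.D ∧ S.EstarW x W i ≠ ⊥}) :
    ∀ h : ℕ, h ≤ d → ∀ l : ℕ, l ≤ d → h + l ≠ d →
      (∀ u ∈ S.Wsplit x W ρ τ d false false h, ∀ v ∈ S.Wsplit x W ρ τ d true true l,
        ⟪u, v⟫ = 0) ∧
      (∀ u ∈ S.Wsplit x W ρ τ d false true h, ∀ v ∈ S.Wsplit x W ρ τ d true false l,
        ⟪u, v⟫ = 0) :=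
  drg_tmodule_split_orth_general S x W ρ τ d

end
end
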